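/- arXiv:1309.3550 — 11 statements merged into one kernel-verified Lean document; each statement's English description precedes it below -/
import Mathlib

section
/- Let Y be a separable complex Banach space, 𝔛 = Y* its dual space, and {T(t)}_{t≥0} a family of ℂ-linear contractions on 𝔛 (‖T(t)x‖ ≤ ‖x‖) with T(0) = id and T(s)T(t) = T(s+t), such that each T(t) is continuous from the weak-* topology of 𝔛 to itself, and for each x ∈ 𝔛 the map t ↦ T(t)x is weak-* continuous. Then T(t)x is jointly weak-* continuous in t and x on the closed unit ball of 𝔛: the map (t,x) ↦ T(t)x from [0,∞) × 𝔛₁ to 𝔛₁ (with 𝔛₁ the closed unit ball carrying the weak-* topology) is continuous. -/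
open scoped NNReal
open Filter MeasureTheory Topology

/-!
Weak-* continuity of `T t` makes `x ↦ T t x y` evaluation at a point of `Y`, so `T t` is the
adjoint of a contraction `S t` of `Y`, and `S` is a contraction semigroup with weakly continuous
orbits. By separability (Pettis) an orbit is Bochner integrable, and the averages
`t⁻¹ ∫₀ᵗ S s y ds` lie in the closed subspace of vectors along which `S` is strongly continuous
at `0`. They converge weakly to `y` as `t → 0⁺`, and a closed subspace is weakly closed, so the
orbits are norm continuous. Joint continuity then follows from
`|x (S t y) - x₀ (S t₀ y)| ≤ ‖S t y - S t₀ y‖ + |(x - x₀) (S t₀ y)|` for `‖x‖ ≤ 1`.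
-/

section

variable {𝕜 E : Type*} [RCLike 𝕜] [NormedAddCommGroup E] [NormedSpace 𝕜 E]

theorem exists_seq_strongDual_injective [TopologicalSpace.SeparableSpace E] :
    ∃ g : ℕ → StrongDual 𝕜 E, Function.Injective fun y n => g n y := by
  obtain ⟨d, hd⟩ := TopologicalSpace.exists_dense_seq E
  choose g hg_norm hg_eq using fun n => exists_dual_vector'' 𝕜 (d n)
  refine ⟨g, fun a b hab => sub_eq_zero.1 (norm_le_zero_iff.1 ?_)⟩
  have hvanish : ∀ n, g n (a - b) = 0 := fun n => by
    simp [map_sub, congrFun hab n]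
  refine le_of_forall_pos_le_add fun ε hε => ?_
  obtain ⟨n, hn⟩ := hd.exists_dist_lt (a - b) (half_pos hε)
  rw [dist_eq_norm] at hn
  have hdn : ‖d n‖ ≤ ‖a - b - d n‖ := calc
    ‖d n‖ = ‖g n (d n - (a - b))‖ := by simp [map_sub, hvanish, hg_eq]
    _ ≤ ‖d n - (a - b)‖ := (g n).le_of_opNorm_le (hg_norm n) _ |>.trans_eq (one_mul _)
    _ = ‖a - b - d n‖ := norm_sub_rev _ _
  linarith [norm_le_insert' (a - b) (d n)]

theorem stronglyMeasurable_of_measurable_dual_apply [CompleteSpace E]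
    [TopologicalSpace.SeparableSpace E] {α : Type*} [MeasurableSpace α] {f : α → E}
    (hf : ∀ x : StrongDual 𝕜 E, Measurable fun a => x (f a)) : StronglyMeasurable f := by
  borelize E
  obtain ⟨g, hg⟩ := exists_seq_strongDual_injective (𝕜 := 𝕜) (E := E)
  have hemb : MeasurableEmbedding fun y n => g n y :=
    (continuous_pi fun n => (g n).continuous).measurableEmbedding hg
  exact (hemb.measurable_comp_iff.1 (measurable_pi_iff.2 fun n => hf (g n))).stronglyMeasurable

theorem IsClosed.mem_of_tendsto_weakly [NormedSpace ℝ E] [IsScalarTower ℝ 𝕜 E] {s : Set E}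
    (hs : IsClosed s) (hconv : Convex ℝ s) {α : Type*} {l : Filter α} [l.NeBot] {z : α → E}
    (hz : ∀ᶠ a in l, z a ∈ s) {y : E}
    (hy : ∀ x : StrongDual 𝕜 E, Tendsto (fun a => x (z a)) l (𝓝 (x y))) : y ∈ s := by
  have hinj : Function.Injective (topDualPairing 𝕜 E).flip := fun a b hab =>
    (SeparatingDual.eq_iff_forall_dual_eq (R := 𝕜)).2 fun x => LinearMap.congr_fun hab x
  have hweak : Tendsto (fun a => toWeakSpace 𝕜 E (z a)) l (𝓝 (toWeakSpace 𝕜 E y)) :=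
    (WeakBilin.tendsto_iff_forall_eval_tendsto _ hinj).2 hy
  have hmem : toWeakSpace 𝕜 E y ∈ toWeakSpace 𝕜 E '' closure s := by
    rw [hconv.toWeakSpace_closure 𝕜]
    exact mem_closure_of_tendsto hweak (hz.mono fun a ha => Set.mem_image_of_mem _ ha)
  rwa [hs.closure_eq, (toWeakSpace 𝕜 E).injective.mem_set_image] at hmem

theorem exists_preadjoint {T : StrongDual 𝕜 E →ₗ[𝕜] StrongDual 𝕜 E}
    (hT : Continuous fun x : WeakDual 𝕜 E => StrongDual.toWeakDual (T (WeakDual.toStrongDual x))) :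
    ∃ S : E →ₗ[𝕜] E, ∀ x y, T x y = x (S y) := by
  have hrep : ∀ y, ∃ z, ∀ x : StrongDual 𝕜 E, T x y = x z := fun y => by
    obtain ⟨z, hz⟩ := LinearMap.dualEmbedding_surjective (topDualPairing 𝕜 E)
      ⟨(topDualPairing 𝕜 E).flip y ∘ₗ T, (WeakDual.eval_continuous y).comp hT⟩
    exact ⟨z, fun x => (DFunLike.congr_fun hz x).symm⟩
  choose S hS using hrep
  refine ⟨{ toFun := S, map_add' := fun a b => ?_, map_smul' := fun c a => ?_ },
    fun x y => hS y x⟩ <;>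
    refine (SeparatingDual.eq_iff_forall_dual_eq (R := 𝕜)).2 fun x => ?_ <;>
    simp [← hS]

theorem exists_preadjoint_of_norm_le {T : StrongDual 𝕜 E →ₗ[𝕜] StrongDual 𝕜 E}
    (hT : Continuous fun x : WeakDual 𝕜 E => StrongDual.toWeakDual (T (WeakDual.toStrongDual x)))
    (hT_norm : ∀ x, ‖T x‖ ≤ ‖x‖) :
    ∃ S : E →L[𝕜] E, ‖S‖ ≤ 1 ∧ ∀ x y, T x y = x (S y) := by
  obtain ⟨S, hS⟩ := exists_preadjoint hT
  have hS_norm : ∀ y, ‖S y‖ ≤ 1 * ‖y‖ := fun y => by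
    refine (NormedSpace.norm_le_dual_bound 𝕜 _ (by positivity) fun x => ?_)
    rw [← hS, one_mul, mul_comm]
    exact (T x).le_of_opNorm_le (hT_norm x) y
  exact ⟨S.mkContinuous 1 hS_norm, LinearMap.mkContinuous_norm_le _ zero_le_one _, hS⟩

theorem continuous_apply_of_continuous_toWeakDual {X : Type*} [TopologicalSpace X]
    {φ : X → StrongDual 𝕜 E} {g : X → E}
    (hφ : Continuous fun p => StrongDual.toWeakDual (φ p)) (hg : Continuous g) {C : ℝ}
    (hC : ∀ p, ‖φ p‖ ≤ C) : Continuous fun p => φ p (g p) := by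
  refine continuous_iff_continuousAt.2 fun p₀ => ?_
  have hsmall : Tendsto (fun p => φ p (g p - g p₀)) (𝓝 p₀) (𝓝 0) := by
    refine squeeze_zero_norm (fun p => (φ p).le_of_opNorm_le (hC p) _) ?_
    simpa using (tendsto_const_nhds (x := C)).mul ((hg.tendsto p₀).sub_const (g p₀)).norm
  have hfixed : Tendsto (fun p => φ p (g p₀)) (𝓝 p₀) (𝓝 (φ p₀ (g p₀))) :=
    ((WeakDual.eval_continuous (g p₀)).comp hφ).tendsto p₀
  simpa [ContinuousAt] using hsmall.add hfixed

structure IsContractionSemigroup (S : ℝ≥0 → E →L[𝕜] E) : Prop where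
  map_zero : S 0 = ContinuousLinearMap.id 𝕜 E
  map_add : ∀ s t, S (s + t) = (S s).comp (S t)
  norm_le_one : ∀ t, ‖S t‖ ≤ 1

namespace IsContractionSemigroup

variable {S : ℝ≥0 → E →L[𝕜] E}

theorem norm_apply_le (hS : IsContractionSemigroup S) (t : ℝ≥0) (y : E) : ‖S t y‖ ≤ ‖y‖ := by
  simpa using (S t).le_of_opNorm_le (hS.norm_le_one t) y

theorem intervalIntegrable_orbit [CompleteSpace E] [TopologicalSpace.SeparableSpace E]
    (hS : IsContractionSemigroup S)
    (hS_weak : ∀ (x : StrongDual 𝕜 E) y, Continuous fun t => x (S t y))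
    (y : E) (a b : ℝ) : IntervalIntegrable (fun s : ℝ => S s.toNNReal y) volume a b := by
  have hmeas : StronglyMeasurable fun s : ℝ => S s.toNNReal y :=
    stronglyMeasurable_of_measurable_dual_apply (𝕜 := 𝕜) fun x =>
      ((hS_weak x y).comp continuous_real_toNNReal).measurable
  exact (intervalIntegrable_const (c := ‖y‖)).mono_fun hmeas.aestronglyMeasurable
    (ae_of_all _ fun s => by simpa using hS.norm_apply_le _ y)

theorem tendsto_apply_integral_orbit [NormedSpace ℝ E] [CompleteSpace E]
    (hS : IsContractionSemigroup S) {y : E}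
    (hint : ∀ a b : ℝ, IntervalIntegrable (fun s : ℝ => S s.toNNReal y) volume a b)
    {t : ℝ} (ht : 0 ≤ t) :
    Tendsto (fun h => S h (∫ s in 0..t, S s.toNNReal y)) (𝓝 0)
      (𝓝 (∫ s in 0..t, S s.toNNReal y)) := by
  set f : ℝ → E := fun s => S s.toNNReal y
  have hshift : ∀ h : ℝ≥0, S h (∫ s in 0..t, f s) = ∫ s in (h : ℝ)..t + h, f s := fun h => by
    rw [← (S h).intervalIntegral_comp_comm (hint 0 t)]
    have hsub := intervalIntegral.integral_comp_add_right f (h : ℝ) (a := 0) (b := t)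
    rw [zero_add] at hsub
    refine (intervalIntegral.integral_congr fun s hs => ?_).trans hsub
    rw [Set.uIcc_of_le ht] at hs
    simp only [f, ← ContinuousLinearMap.comp_apply, ← hS.map_add,
      Real.toNNReal_add hs.1 h.coe_nonneg, Real.toNNReal_coe, add_comm]
  have hbound : ∀ h : ℝ≥0, ‖S h (∫ s in 0..t, f s) - ∫ s in 0..t, f s‖ ≤ 2 * ‖y‖ * h := by
    intro h
    rw [hshift, intervalIntegral.integral_interval_sub_interval_comm (hint _ _) (hint _ _)
      (hint _ _)]
    refine (norm_sub_le _ _).trans ?_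
    have h1 := intervalIntegral.norm_integral_le_of_norm_le_const
      (a := (h : ℝ)) (b := 0) fun s _ => hS.norm_apply_le s.toNNReal y
    have h2 := intervalIntegral.norm_integral_le_of_norm_le_const
      (a := t + h) (b := t) fun s _ => hS.norm_apply_le s.toNNReal y
    simp only [zero_sub, abs_neg, NNReal.abs_eq, sub_add_cancel_left] at h1 h2
    linarith
  rw [tendsto_iff_norm_sub_tendsto_zero]
  refine squeeze_zero (fun _ => norm_nonneg _) hbound ?_
  simpa using tendsto_const_nhds.mul (NNReal.continuous_coe.tendsto (0 : ℝ≥0)) (a := 2 * ‖y‖)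

theorem tendsto_apply_average_orbit [NormedSpace ℝ E] [IsScalarTower ℝ 𝕜 E] [CompleteSpace E]
    (hS : IsContractionSemigroup S)
    (hS_weak : ∀ (x : StrongDual 𝕜 E) y, Continuous fun t => x (S t y)) {y : E}
    (hint : ∀ a b : ℝ, IntervalIntegrable (fun s : ℝ => S s.toNNReal y) volume a b)
    (x : StrongDual 𝕜 E) :
    Tendsto (fun t : ℝ => x (t⁻¹ • ∫ s in 0..t, S s.toNNReal y)) (𝓝[≠] 0) (𝓝 (x y)) := by
  have hg : Continuous fun s : ℝ => x (S s.toNNReal y) :=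
    (hS_weak x y).comp continuous_real_toNNReal
  have hslope :=
    hasDerivAt_iff_tendsto_slope_zero.1 (hg.integral_hasStrictDerivAt 0 0).hasDerivAt
  simp only [zero_add, intervalIntegral.integral_same, sub_zero, Real.toNNReal_zero, hS.map_zero,
    ContinuousLinearMap.id_apply] at hslope
  refine hslope.congr fun t => ?_
  rw [ContinuousLinearMap.map_smul_of_tower, x.intervalIntegral_comp_comm (hint 0 t)]

theorem tendsto_apply_nhds_zero [NormedSpace ℝ E] [IsScalarTower ℝ 𝕜 E] [CompleteSpace E]
    [TopologicalSpace.SeparableSpace E] (hS : IsContractionSemigroup S)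
    (hS_weak : ∀ (x : StrongDual 𝕜 E) y, Continuous fun t => x (S t y))
    (y : E) : Tendsto (fun t => S t y) (𝓝 0) (𝓝 y) := by
  set G : Set E := {w | Tendsto (fun t => S t w) (𝓝 0) (𝓝 w)}
  have hG_closed : IsClosed G := by
    have hbdd : ∃ C, ∀ t, ‖S t‖ ≤ C := ⟨1, hS.norm_le_one⟩
    exact Equicontinuous.isClosed_setOfPred_tendsto (f := id)
      (((NormedSpace.equicontinuous_TFAE S).out 5 1).1 hbdd) continuous_id
  have hG_convex : Convex ℝ G := fun a ha b hb μ ν _ _ _ => by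
    show Tendsto _ _ _
    simpa only [_root_.map_add, ContinuousLinearMap.map_smul_of_tower] using
      (ha.const_smul μ).add (hb.const_smul ν)
  have hint := hS.intervalIntegrable_orbit hS_weak y
  refine hG_closed.mem_of_tendsto_weakly (𝕜 := 𝕜) hG_convex (l := 𝓝[>] 0) ?_
    fun x => (hS.tendsto_apply_average_orbit hS_weak hint x).mono_left
      (nhdsWithin_mono _ fun t ht => ne_of_gt ht)
  filter_upwards [self_mem_nhdsWithin] with t ht
  show Tendsto _ _ _
  simpa only [ContinuousLinearMap.map_smul_of_tower] using
    (hS.tendsto_apply_integral_orbit hint (le_of_lt ht)).const_smul t⁻¹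

theorem norm_apply_sub_apply_le (hS : IsContractionSemigroup S) (y : E) {t₀ t : ℝ≥0}
    (ht : t₀ ≤ t) : ‖S t y - S t₀ y‖ ≤ ‖S (t - t₀) y - y‖ := by
  rw [← add_tsub_cancel_of_le ht, hS.map_add, add_tsub_cancel_left,
    ContinuousLinearMap.comp_apply, ← map_sub]
  exact hS.norm_apply_le t₀ _

theorem continuous_apply [NormedSpace ℝ E] [IsScalarTower ℝ 𝕜 E] [CompleteSpace E]
    [TopologicalSpace.SeparableSpace E] (hS : IsContractionSemigroup S)
    (hS_weak : ∀ (x : StrongDual 𝕜 E) y, Continuous fun t => x (S t y))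
    (y : E) : Continuous fun t => S t y := by
  refine continuous_iff_continuousAt.2 fun t₀ => tendsto_iff_norm_sub_tendsto_zero.2 ?_
  have hbound : ∀ t, ‖S t y - S t₀ y‖ ≤ ‖S (t - t₀) y - y‖ + ‖S (t₀ - t) y - y‖ := fun t => by
    rcases le_total t₀ t with h | h
    · exact (hS.norm_apply_sub_apply_le y h).trans (le_add_of_nonneg_right (norm_nonneg _))
    · rw [norm_sub_rev]
      exact (hS.norm_apply_sub_apply_le y h).trans (le_add_of_nonneg_left (norm_nonneg _))
  have h0 := (hS.tendsto_apply_nhds_zero hS_weak y).sub_const y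
  rw [sub_self] at h0
  have hright : Tendsto (fun t => t - t₀) (𝓝 t₀) (𝓝 0) := by
    simpa using (continuous_id.sub continuous_const).tendsto t₀ (f := fun t : ℝ≥0 => t - t₀)
  have hleft : Tendsto (fun t => t₀ - t) (𝓝 t₀) (𝓝 0) := by
    simpa using (continuous_const.sub continuous_id).tendsto t₀ (f := fun t : ℝ≥0 => t₀ - t)
  have hsum : Tendsto (fun t => ‖S (t - t₀) y - y‖ + ‖S (t₀ - t) y - y‖) (𝓝 t₀) (𝓝 0) := by
    simpa using (h0.comp hright).norm.add (h0.comp hleft).norm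
  exact squeeze_zero (fun _ => norm_nonneg _) hbound hsum

end IsContractionSemigroup

end

/-- A weak-* continuous semigroup of weak-* continuous contractions on the dual of a
separable Banach space is jointly weak-* continuous in `(t, x)` on the closed unit ball. -/
theorem stmt3 (Y : Type*) [NormedAddCommGroup Y] [NormedSpace ℂ Y] [CompleteSpace Y]
    [TopologicalSpace.SeparableSpace Y]
    (T : ℝ≥0 → (Y →L[ℂ] ℂ) →ₗ[ℂ] (Y →L[ℂ] ℂ))
    (hT0 : T 0 = LinearMap.id)
    (hTadd : ∀ s t : ℝ≥0, T (s + t) = (T s).comp (T t))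
    (hcontr : ∀ (t : ℝ≥0) (x : Y →L[ℂ] ℂ), ‖T t x‖ ≤ ‖x‖)
    -- the weak-* topology on the dual `Y →L[ℂ] ℂ`
    (wstar : TopologicalSpace (Y →L[ℂ] ℂ))
    (hwstar : wstar = TopologicalSpace.induced
      (fun (x : Y →L[ℂ] ℂ) (y : Y) => x y) Pi.topologicalSpace)
    -- each `T t` is weak-* continuous
    (hTw : ∀ t : ℝ≥0, @Continuous _ _ wstar wstar (T t))
    -- `t ↦ T t x` is weak-* continuous for each `x`
    (hTx : ∀ x : Y →L[ℂ] ℂ, @Continuous ℝ≥0 _ _ wstar fun t => T t x) :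
    @Continuous (ℝ≥0 × {x : Y →L[ℂ] ℂ // ‖x‖ ≤ 1}) {x : Y →L[ℂ] ℂ // ‖x‖ ≤ 1}
      (@instTopologicalSpaceProd _ _ _ (TopologicalSpace.induced Subtype.val wstar))
      (TopologicalSpace.induced Subtype.val wstar)
      (fun p => ⟨T p.1 p.2.1, (hcontr p.1 p.2.1).trans p.2.2⟩) := by
  subst hwstar
  choose S hS_norm hTS using fun t => exists_preadjoint_of_norm_le (hTw t) (hcontr t)
  have hS : IsContractionSemigroup S := by
    refine ⟨?_, fun s t => ?_, hS_norm⟩ <;> ext y <;>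
      refine (SeparatingDual.eq_iff_forall_dual_eq (R := ℂ)).2 fun x => ?_
    · simp [← hTS, hT0]
    · simp [← hTS, add_comm s t, hTadd]
  have hS_weak : ∀ (x : StrongDual ℂ Y) y, Continuous fun t => x (S t y) := fun x y =>
    ((WeakDual.eval_continuous y).comp (hTx x)).congr fun t => hTS t x y
  -- the ball in the goal carries the weak-* topology, not the subtype instance: install it
  -- as the instance so that `continuous_fst` and `continuous_snd` apply
  let _ : TopologicalSpace {x : Y →L[ℂ] ℂ // ‖x‖ ≤ 1} :=
    .induced Subtype.val (inferInstanceAs (TopologicalSpace (WeakDual ℂ Y)))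
  have hball : Continuous fun x : {x : Y →L[ℂ] ℂ // ‖x‖ ≤ 1} => StrongDual.toWeakDual x.1 :=
    continuous_induced_dom
  refine continuous_induced_rng.2 (WeakDual.continuous_of_continuous_eval fun y => ?_)
  refine Continuous.congr ?_ fun p => (hTS p.1 p.2.1 y).symm
  exact continuous_apply_of_continuous_toWeakDual (hball.comp continuous_snd)
    ((hS.continuous_apply hS_weak y).comp continuous_fst) fun p => p.2.2
end

section
/- Let H be a separable complex Hilbert space, M a von Neumann algebra on H, and {φ_t}_{t≥0} a family of ℂ-linear contractions φ_t : M → M (‖φ_t(a)‖ ≤ ‖a‖) with φ_0 = id and φ_s ∘ φ_t = φ_{s+t}, such that each φ_t is continuous on bounded subsets of M with respect to the strong operator topology, and for each a ∈ M the map t ↦ φ_t(a) is continuous with respect to the strong operator topology. Then φ_t(a) is jointly strongly continuous in t and a at nonzero times: the map (t,a) ↦ φ_t(a) from (0,∞) × M₁ to M₁ (with M₁ the closed unit ball of M carrying the strong operator topology) is continuous. -/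
open scoped NNReal

/-- The weak operator topology on the bounded operators of a complex Hilbert space:
the topology induced by the matrix coefficients `T ↦ ⟪T x, y⟫`. -/
noncomputable def wotCLM (H : Type*) [NormedAddCommGroup H] [InnerProductSpace ℂ H] :
    TopologicalSpace (H →L[ℂ] H) :=
  TopologicalSpace.induced
    (fun T => fun p : H × H => (inner ℂ (T p.1) p.2 : ℂ)) Pi.topologicalSpace

/-- The strong operator topology on the bounded operators of a complex Hilbert space:
the topology of pointwise norm-convergence. -/
def sotCLM (H : Type*) [NormedAddCommGroup H] [InnerProductSpace ℂ H] :
    TopologicalSpace (H →L[ℂ] H) :=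
  TopologicalSpace.induced (fun T => fun h : H => T h) Pi.topologicalSpace

/-- The weak operator topology on a von Neumann algebra (as a set of operators). -/
noncomputable def wotvN (H : Type*) [NormedAddCommGroup H] [InnerProductSpace ℂ H] [CompleteSpace H]
    (M : VonNeumannAlgebra H) : TopologicalSpace ↥M :=
  TopologicalSpace.induced (fun a : ↥M => (a : H →L[ℂ] H)) (wotCLM H)

/-- The strong operator topology on a von Neumann algebra (as a set of operators). -/
def sotvN (H : Type*) [NormedAddCommGroup H] [InnerProductSpace ℂ H] [CompleteSpace H]
    (M : VonNeumannAlgebra H) : TopologicalSpace ↥M :=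
  TopologicalSpace.induced (fun a : ↥M => (a : H →L[ℂ] H)) (sotCLM H)

/-- The elements of a von Neumann algebra form a `ℂ`-algebra. -/
noncomputable instance vNAlgebra (H : Type*) [NormedAddCommGroup H] [InnerProductSpace ℂ H]
    [CompleteSpace H] (M : VonNeumannAlgebra H) : Algebra ℂ ↥M :=
  Subalgebra.algebra M.toStarSubalgebra.toSubalgebra

/-! On the unit ball the strong topology is induced by evaluation at a dense sequence, so it is
first countable and sequences suffice. Let `t n → t > 0` and let `c n` be a bounded SOT-null
sequence. For each vector `ξₖ` of the dense sequence, the functions `u ↦ φ u (c n) ξₖ` are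
continuous and tend to `0` pointwise, so by Baire's theorem (Osgood) there is a time `u ∈ (0, t)`
around which they tend to `0` jointly in `(n, u)`. Splitting
`φ (t n) = φ (t - u) ∘ φ (t n - (t - u))`, the inner factor sends `c n` to a bounded SOT-null
sequence, and the outer one is SOT-continuous on bounded sets. -/

open Filter Topology TopologicalSpace

theorem ContinuousLinearMap.tendsto_apply_of_denseRange {𝕜 E F ι κ : Type*}
    [NontriviallyNormedField 𝕜] [SeminormedAddCommGroup E] [NormedSpace 𝕜 E]
    [SeminormedAddCommGroup F] [NormedSpace 𝕜 F] {f : ι → E →L[𝕜] F} {C : ℝ}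
    (hf : ∀ i, ‖f i‖ ≤ C) {l : Filter ι} {g : E →L[𝕜] F} {v : κ → E} (hv : DenseRange v)
    (h : ∀ k, Tendsto (fun i => f i (v k)) l (𝓝 (g (v k)))) (x : E) :
    Tendsto (fun i => f i x) l (𝓝 (g x)) := by
  have hequi : Equicontinuous ((↑) ∘ f : ι → E → F) :=
    ((NormedSpace.equicontinuous_TFAE f).out 5 1).1 (Exists.intro C hf)
  exact (hequi.isClosed_setOfPred_tendsto (l := l) g.continuous).closure_subset_iff.2
    (Set.range_subset_iff.2 h) (hv x)

theorem ContinuousLinearMap.induced_apply_eq_induced_apply_denseRange {𝕜 E F B κ : Type*}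
    [NontriviallyNormedField 𝕜] [SeminormedAddCommGroup E] [NormedSpace 𝕜 E]
    [SeminormedAddCommGroup F] [NormedSpace 𝕜 F] {f : B → E →L[𝕜] F} {C : ℝ}
    (hf : ∀ b, ‖f b‖ ≤ C) {v : κ → E} (hv : DenseRange v) :
    induced (fun b x => f b x) Pi.topologicalSpace =
      induced (fun b k => f b (v k)) Pi.topologicalSpace := by
  refine le_antisymm ?_ ?_
  · calc induced (fun b x => f b x) Pi.topologicalSpace
        ≤ induced (fun b x => f b x) (induced (fun w k => w (v k)) Pi.topologicalSpace) :=
          induced_mono (continuous_iff_le_induced.1 (continuous_pi fun k => continuous_apply (v k)))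
      _ = _ := induced_compose
  · let _ : TopologicalSpace B := induced (fun b k => f b (v k)) Pi.topologicalSpace
    have hv_cont (k : κ) : Continuous fun b => f b (v k) :=
      (continuous_apply k).comp (continuous_induced_dom (f := fun b k => f b (v k)))
    refine continuous_iff_le_induced.1 (continuous_pi fun x => ?_)
    exact continuous_iff_continuousAt.2 fun b =>
      tendsto_apply_of_denseRange hf hv (fun k => (hv_cont k).continuousAt) x

section VonNeumannAlgebra

variable {H : Type*} [NormedAddCommGroup H] [InnerProductSpace ℂ H] [CompleteSpace H]
  {M : VonNeumannAlgebra H}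

theorem tendsto_sotvN_iff {X : Type*} {l : Filter X} {f : X → ↥M} {b : ↥M} :
    Tendsto f l (@nhds _ (sotvN H M) b) ↔
      ∀ ξ : H, Tendsto (fun x => (f x : H →L[ℂ] H) ξ) l (𝓝 ((b : H →L[ℂ] H) ξ)) := by
  rw [sotvN, @nhds_induced _ _ (sotCLM H), tendsto_comap_iff, sotCLM, nhds_induced,
    tendsto_comap_iff]
  exact tendsto_pi_nhds

theorem tendsto_induced_sotvN_iff {X : Type*} {p : ↥M → Prop} {l : Filter X} {f : X → Subtype p}
    {b : Subtype p} :
    Tendsto f l (@nhds _ (induced Subtype.val (sotvN H M)) b) ↔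
      ∀ ξ : H, Tendsto (fun x => ((f x : ↥M) : H →L[ℂ] H) ξ) l (𝓝 (((b : ↥M) : H →L[ℂ] H) ξ)) := by
  rw [@nhds_induced _ _ (sotvN H M), tendsto_comap_iff]
  exact tendsto_sotvN_iff

theorem continuous_sotvN_iff {X : Type*} [TopologicalSpace X] {f : X → ↥M} :
    Continuous[_, sotvN H M] f ↔ ∀ ξ : H, Continuous fun x => (f x : H →L[ℂ] H) ξ := by
  simp only [continuous_iff_continuousAt, ContinuousAt, tendsto_sotvN_iff]
  exact forall_comm

theorem firstCountableTopology_sotvN_ball [SeparableSpace H] (r : ℝ) :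
    @FirstCountableTopology {a : ↥M // ‖(a : H →L[ℂ] H)‖ ≤ r}
      (induced Subtype.val (sotvN H M)) := by
  have : Nonempty H := ⟨0⟩
  have hball : induced Subtype.val (sotvN H M) =
      induced (fun (b : {a : ↥M // ‖(a : H →L[ℂ] H)‖ ≤ r}) (k : ℕ) =>
        ((b : ↥M) : H →L[ℂ] H) (denseSeq H k)) Pi.topologicalSpace := by
    rw [← ContinuousLinearMap.induced_apply_eq_induced_apply_denseRange
      (f := fun b : {a : ↥M // ‖(a : H →L[ℂ] H)‖ ≤ r} => ((b : ↥M) : H →L[ℂ] H))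
      (fun b => b.2) (denseRange_denseSeq H)]
    simp only [sotvN, sotCLM, induced_compose]
    rfl
  rw [hball]
  exact firstCountableTopology_induced _ _ _

theorem tendsto_apply_zero_of_continuousOn_sotvN {ι : Type*} {l : Filter ι} {T : ↥M →ₗ[ℂ] ↥M}
    {r : ℝ} (hr : 0 ≤ r)
    (hT : @ContinuousOn _ _ (sotvN H M) (sotvN H M) T {a : ↥M | ‖(a : H →L[ℂ] H)‖ ≤ r})
    {c : ι → ↥M} (hc : ∀ i, ‖(c i : H →L[ℂ] H)‖ ≤ r)
    (hc0 : ∀ ξ : H, Tendsto (fun i => (c i : H →L[ℂ] H) ξ) l (𝓝 0)) (ξ : H) :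
    Tendsto (fun i => (T (c i) : H →L[ℂ] H) ξ) l (𝓝 0) := by
  have hc' : Tendsto c l (@nhdsWithin _ (sotvN H M) 0 {a : ↥M | ‖(a : H →L[ℂ] H)‖ ≤ r}) :=
    tendsto_inf.2 ⟨tendsto_sotvN_iff.2 (by simpa using hc0), tendsto_principal.2 (.of_forall hc)⟩
  simpa using tendsto_sotvN_iff.1 (Tendsto.comp (hT 0 (by simpa using hr)) hc') ξ

end VonNeumannAlgebra

theorem eventually_residual_tendsto_prod_nhds {X E : Type*} [TopologicalSpace X] [BaireSpace X]
    [SeminormedAddCommGroup E] {g : ℕ → X → E} (hg : ∀ n, Continuous (g n))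
    (hg0 : ∀ x, Tendsto (fun n => g n x) atTop (𝓝 0)) :
    ∀ᶠ x in residual X, Tendsto (fun p : ℕ × X => g p.1 p.2) (atTop ×ˢ 𝓝 x) (𝓝 0) := by
  let F (ε : ℝ) (N : ℕ) : Set X := {x | ∀ n ≥ N, ‖g n x‖ ≤ ε}
  have hF_closed (ε : ℝ) (N : ℕ) : IsClosed (F ε N) := by
    simp only [F, Set.ofPred_forall]
    exact isClosed_iInter fun n => isClosed_iInter fun _ =>
      isClosed_le (hg n).norm continuous_const
  have hF_cover (ε : ℝ) (hε : 0 < ε) : ⋃ N, F ε N = Set.univ :=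
    Set.eq_univ_of_forall fun x => Set.mem_iUnion.2 <| eventually_atTop.1 <|
      (NormedAddGroup.tendsto_nhds_zero.1 (hg0 x) ε hε).mono fun _ h => h.le
  have hU (m : ℕ) : ⋃ N, interior (F (1 / (m + 1)) N) ∈ residual X :=
    residual_of_dense_open (isOpen_iUnion fun _ => isOpen_interior)
      (dense_iUnion_interior_of_closed (hF_closed _) (hF_cover _ Nat.one_div_pos_of_nat))
  filter_upwards [eventually_countable_forall.2 hU] with x hx
  refine NormedAddGroup.tendsto_nhds_zero.2 fun ε hε => ?_
  obtain ⟨m, hm⟩ := exists_nat_one_div_lt hε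
  obtain ⟨N, hN⟩ := Set.mem_iUnion.1 (hx m)
  filter_upwards [prod_mem_prod (eventually_ge_atTop N) (mem_interior_iff_mem_nhds.1 hN)]
    with p hp
  exact (hp.2 p.1 hp.1).trans_lt hm

section Semigroup

variable {H : Type*} [NormedAddCommGroup H] [InnerProductSpace ℂ H] [CompleteSpace H]
  [SeparableSpace H] {M : VonNeumannAlgebra H} {φ : ℝ≥0 → ↥M →ₗ[ℂ] ↥M}
  {t : ℕ → ℝ≥0} {t₀ : ℝ≥0}

theorem tendsto_semigroup_apply_zero
    (hadd : ∀ s t : ℝ≥0, φ (s + t) = (φ s).comp (φ t))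
    (hcontr : ∀ (t : ℝ≥0) (a : ↥M), ‖((φ t a : ↥M) : H →L[ℂ] H)‖ ≤ ‖(a : H →L[ℂ] H)‖)
    (hbdd : ∀ (t : ℝ≥0) (r : ℝ), @ContinuousOn ↥M ↥M (sotvN H M) (sotvN H M) (φ t)
      {a : ↥M | ‖(a : H →L[ℂ] H)‖ ≤ r})
    (hcont : ∀ a : ↥M, @Continuous ℝ≥0 ↥M _ (sotvN H M) fun t => φ t a)
    (ht₀ : 0 < t₀) (ht : Tendsto t atTop (𝓝 t₀))
    {c : ℕ → ↥M} {r : ℝ} (hc : ∀ n, ‖(c n : H →L[ℂ] H)‖ ≤ r)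
    (hc0 : ∀ ξ : H, Tendsto (fun n => (c n : H →L[ℂ] H) ξ) atTop (𝓝 0)) (ξ : H) :
    Tendsto (fun n => (φ (t n) (c n) : H →L[ℂ] H) ξ) atTop (𝓝 0) := by
  have : Nonempty H := ⟨0⟩
  have hr : 0 ≤ r := (norm_nonneg _).trans (hc 0)
  have hφc (u : ℝ≥0) (n : ℕ) : ‖(φ u (c n) : H →L[ℂ] H)‖ ≤ r := (hcontr u (c n)).trans (hc n)
  have hgood : ∀ᶠ u in residual ℝ≥0, ∀ k, Tendsto
      (fun p : ℕ × ℝ≥0 => (φ p.2 (c p.1) : H →L[ℂ] H) (denseSeq H k)) (atTop ×ˢ 𝓝 u) (𝓝 0) :=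
    eventually_countable_forall.2 fun k => eventually_residual_tendsto_prod_nhds
      (fun n => continuous_sotvN_iff.1 (hcont (c n)) _)
      (fun u => tendsto_apply_zero_of_continuousOn_sotvN hr (hbdd u r) hc hc0 _)
  obtain ⟨u, hu, hu_pos, hu_lt⟩ := (dense_of_mem_residual hgood).exists_mem_open isOpen_Ioo
    ⟨t₀ / 2, half_pos ht₀, half_lt_self ht₀⟩
  set s := t₀ - u
  have hts : Tendsto (fun n => t n - s) atTop (𝓝 u) := by
    simpa [s, tsub_tsub_cancel_of_le hu_lt.le] using ht.sub (tendsto_const_nhds (x := s))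
  have hd (ξ : H) : Tendsto (fun n => (φ (t n - s) (c n) : H →L[ℂ] H) ξ) atTop (𝓝 0) := by
    have hk (k : ℕ) : Tendsto (fun n => (φ (t n - s) (c n) : H →L[ℂ] H) (denseSeq H k))
        atTop (𝓝 0) := by
      simpa only [Function.comp_def, id] using (hu k).comp (tendsto_id.prodMk hts)
    simpa using ContinuousLinearMap.tendsto_apply_of_denseRange (g := 0) (fun n => hφc _ n)
      (denseRange_denseSeq H) (by simpa using hk) ξ
  refine (tendsto_apply_zero_of_continuousOn_sotvN hr (hbdd s r) (fun n => hφc _ n) hd ξ).congr' ?_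
  filter_upwards [ht.eventually (eventually_gt_nhds (tsub_lt_self ht₀ hu_pos))] with n hn
  rw [← LinearMap.comp_apply, ← hadd, add_tsub_cancel_of_le hn.le]

theorem tendsto_semigroup_apply
    (hadd : ∀ s t : ℝ≥0, φ (s + t) = (φ s).comp (φ t))
    (hcontr : ∀ (t : ℝ≥0) (a : ↥M), ‖((φ t a : ↥M) : H →L[ℂ] H)‖ ≤ ‖(a : H →L[ℂ] H)‖)
    (hbdd : ∀ (t : ℝ≥0) (r : ℝ), @ContinuousOn ↥M ↥M (sotvN H M) (sotvN H M) (φ t)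
      {a : ↥M | ‖(a : H →L[ℂ] H)‖ ≤ r})
    (hcont : ∀ a : ↥M, @Continuous ℝ≥0 ↥M _ (sotvN H M) fun t => φ t a)
    (ht₀ : 0 < t₀) (ht : Tendsto t atTop (𝓝 t₀))
    {a : ℕ → ↥M} {a₀ : ↥M} {r : ℝ} (ha : ∀ n, ‖(a n : H →L[ℂ] H)‖ ≤ r)
    (ha₀ : ∀ ξ : H, Tendsto (fun n => (a n : H →L[ℂ] H) ξ) atTop (𝓝 ((a₀ : H →L[ℂ] H) ξ)))
    (ξ : H) :
    Tendsto (fun n => (φ (t n) (a n) : H →L[ℂ] H) ξ) atTop (𝓝 ((φ t₀ a₀ : H →L[ℂ] H) ξ)) := by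
  have hdiff := tendsto_semigroup_apply_zero hadd hcontr hbdd hcont ht₀ ht
    (c := fun n => a n - a₀) (fun n => norm_sub_le_of_le (ha n) le_rfl)
    (fun ξ => by simpa using (ha₀ ξ).sub_const ((a₀ : H →L[ℂ] H) ξ)) ξ
  have hfix := ((continuous_sotvN_iff.1 (hcont a₀) ξ).tendsto t₀).comp ht
  simpa using hdiff.add hfix

end Semigroup

theorem stmt4_general (H : Type) [NormedAddCommGroup H] [InnerProductSpace ℂ H] [CompleteSpace H]
    [TopologicalSpace.SeparableSpace H] (M : VonNeumannAlgebra H)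
    (φ : ℝ≥0 → ↥M →ₗ[ℂ] ↥M)
    (hadd : ∀ s t : ℝ≥0, φ (s + t) = (φ s).comp (φ t))
    (hcontr : ∀ (t : ℝ≥0) (a : ↥M), ‖((φ t a : ↥M) : H →L[ℂ] H)‖ ≤ ‖(a : H →L[ℂ] H)‖)
    -- each `φ t` is SOT-continuous on bounded subsets of `M`
    (hbdd : ∀ (t : ℝ≥0) (r : ℝ), @ContinuousOn ↥M ↥M (sotvN H M) (sotvN H M) (φ t)
      {a : ↥M | ‖(a : H →L[ℂ] H)‖ ≤ r})
    -- `t ↦ φ t a` is SOT-continuous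
    (hcont : ∀ a : ↥M, @Continuous ℝ≥0 ↥M _ (sotvN H M) fun t => φ t a) :
    @Continuous ({t : ℝ≥0 // 0 < t} × {a : ↥M // ‖(a : H →L[ℂ] H)‖ ≤ 1})
      {a : ↥M // ‖(a : H →L[ℂ] H)‖ ≤ 1}
      (@instTopologicalSpaceProd _ _ _ (TopologicalSpace.induced Subtype.val (sotvN H M)))
      (TopologicalSpace.induced Subtype.val (sotvN H M))
      (fun p => ⟨φ p.1.1 p.2.1, (hcontr p.1.1 p.2.1).trans p.2.2⟩) := by
  let _ : TopologicalSpace {a : ↥M // ‖(a : H →L[ℂ] H)‖ ≤ 1} := induced Subtype.val (sotvN H M)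
  have : FirstCountableTopology {a : ↥M // ‖(a : H →L[ℂ] H)‖ ≤ 1} :=
    firstCountableTopology_sotvN_ball 1
  refine continuous_iff_seqContinuous.2 fun {x} {p} hx => ?_
  rw [nhds_prod_eq, tendsto_prod_iff'] at hx
  exact tendsto_induced_sotvN_iff.2 (tendsto_semigroup_apply hadd hcontr hbdd hcont p.1.2
    (continuous_subtype_val.continuousAt.tendsto.comp hx.1) (fun n => (x n).2.2)
    (tendsto_induced_sotvN_iff.1 hx.2))

/-- A semigroup of contractions on a von Neumann algebra on a separable Hilbert space,
each SOT-continuous on bounded sets and pointwise SOT-continuous in time, is jointly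
SOT-continuous on `(0,∞) × M₁`. -/
theorem stmt4 (H : Type) [NormedAddCommGroup H] [InnerProductSpace ℂ H] [CompleteSpace H]
    [TopologicalSpace.SeparableSpace H] (M : VonNeumannAlgebra H)
    (φ : ℝ≥0 → ↥M →ₗ[ℂ] ↥M)
    (hφ0 : φ 0 = LinearMap.id)
    (hadd : ∀ s t : ℝ≥0, φ (s + t) = (φ s).comp (φ t))
    (hcontr : ∀ (t : ℝ≥0) (a : ↥M), ‖((φ t a : ↥M) : H →L[ℂ] H)‖ ≤ ‖(a : H →L[ℂ] H)‖)
    -- each `φ t` is SOT-continuous on bounded subsets of `M`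
    (hbdd : ∀ (t : ℝ≥0) (r : ℝ), @ContinuousOn ↥M ↥M (sotvN H M) (sotvN H M) (φ t)
      {a : ↥M | ‖(a : H →L[ℂ] H)‖ ≤ r})
    -- `t ↦ φ t a` is SOT-continuous
    (hcont : ∀ a : ↥M, @Continuous ℝ≥0 ↥M _ (sotvN H M) fun t => φ t a) :
    @Continuous ({t : ℝ≥0 // 0 < t} × {a : ↥M // ‖(a : H →L[ℂ] H)‖ ≤ 1})
      {a : ↥M // ‖(a : H →L[ℂ] H)‖ ≤ 1}
      (@instTopologicalSpaceProd _ _ _ (TopologicalSpace.induced Subtype.val (sotvN H M)))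
      (TopologicalSpace.induced Subtype.val (sotvN H M))
      (fun p => ⟨φ p.1.1 p.2.1, (hcontr p.1.1 p.2.1).trans p.2.2⟩) :=
  stmt4_general H M φ hadd hcontr hbdd hcont
end

section
/- Suppose the pair (A, B) is right-liberated in 𝒞 with respect to (𝔢, ρ, ψ). Then the image under 𝔢 of the subalgebra ⟨A, B⟩ generated by A and B equals the image under 𝔢 of B: 𝔢(⟨A, B⟩) = 𝔢(B) as subsets of 𝒞. -/
/-- The pair of subalgebras `(A, B)` of `C` is *right-liberated* with respect to
`(e, ρ, ψ)` if `e` is a `B`-bimodule map and every alternating product of centered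
elements `å₁ b̃₁ å₂ ⋯ b̃_{n-1} åₙ` (with `å = a - ρ a` and `b̃ = b - ψ b`) is killed by `e`. -/
def RightLiberated {C : Type*} [Ring C] [Algebra ℂ C]
    (A B : Subalgebra ℂ C) (e : C →ₗ[ℂ] C)
    (ρ : A →ₗ[ℂ] B) (ψ : B →ₗ[ℂ] A) : Prop :=
  (∀ (b₁ b₂ : B) (x : C), e ((b₁ : C) * x * (b₂ : C)) = (b₁ : C) * e x * (b₂ : C)) ∧
  (∀ (n : ℕ) (a : Fin (n + 1) → A) (b : Fin n → B),
    e ((List.ofFn (fun i : Fin n =>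
        ((a i.castSucc : C) - ((ρ (a i.castSucc) : B) : C)) *
          ((b i : C) - ((ψ (b i) : A) : C)))).prod *
      ((a (Fin.last n) : C) - ((ρ (a (Fin.last n)) : B) : C))) = 0)

namespace RL7Aux

variable {C : Type*} [Ring C] [Algebra ℂ C] {A B : Subalgebra ℂ C}

/-- centered element of `A` -/
def oa (ρ : A →ₗ[ℂ] B) (a : A) : C := (a : C) - ((ρ a : B) : C)

/-- centered element of `B` -/
def tb (ψ : B →ₗ[ℂ] A) (b : B) : C := (b : C) - ((ψ b : A) : C)

/-- alternating product of centered elements -/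
def chain (ρ : A →ₗ[ℂ] B) (ψ : B →ₗ[ℂ] A) (L : List (A × B)) : C :=
  (L.map fun p => oa ρ p.1 * tb ψ p.2).prod

/-- plain word `a₁ b₁ a₂ b₂ ⋯ aₘ bₘ` -/
def word (L : List (A × B)) : C := (L.map fun p => (p.1 : C) * (p.2 : C)).prod

/-- span of words with at most `k` `A`-letters, with a left `B`-coefficient -/
def D (A B : Subalgebra ℂ C) (k : ℕ) : Submodule ℂ C :=
  Submodule.span ℂ {x | ∃ (b₀ : B) (L : List (A × B)), L.length ≤ k ∧ x = (b₀ : C) * word L}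

/-- the submodule of elements whose `e`-image is the `e`-image of an element of `B` -/
def T (B : Subalgebra ℂ C) (e : C →ₗ[ℂ] C) : Submodule ℂ C where
  carrier := {x | ∃ b : B, e x = e (b : C)}
  add_mem' := by
    rintro x y ⟨bx, hx⟩ ⟨by', hy⟩
    exact ⟨bx + by', by simp [map_add, hx, hy]⟩
  zero_mem' := ⟨0, by simp⟩
  smul_mem' := by
    rintro c x ⟨b, hb⟩
    exact ⟨c • b, by simp [map_smul, hb]⟩

lemma word_nil : word (A := A) (B := B) [] = 1 := rfl

lemma word_cons (p : A × B) (L : List (A × B)) :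
    word (p :: L) = (p.1 : C) * (p.2 : C) * word L := by
  simp [word]

lemma word_append (L₁ L₂ : List (A × B)) :
    word (L₁ ++ L₂) = word L₁ * word L₂ := by
  simp [word]

lemma chain_nil (ρ : A →ₗ[ℂ] B) (ψ : B →ₗ[ℂ] A) : chain ρ ψ [] = 1 := rfl

lemma chain_append (ρ : A →ₗ[ℂ] B) (ψ : B →ₗ[ℂ] A) (L₁ L₂ : List (A × B)) :
    chain ρ ψ (L₁ ++ L₂) = chain ρ ψ L₁ * chain ρ ψ L₂ := by
  simp [chain]

lemma mem_D_of_gen {k : ℕ} (b₀ : B) (L : List (A × B)) (hL : L.length ≤ k) :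
    (b₀ : C) * word L ∈ D A B k :=
  Submodule.subset_span ⟨b₀, L, hL, rfl⟩

lemma bD (k : ℕ) (b : B) : (b : C) ∈ D A B k := by
  have := mem_D_of_gen (k := k) b ([] : List (A × B)) (by simp)
  simpa [word_nil] using this

lemma one_D (k : ℕ) : (1 : C) ∈ D A B k := by
  simpa using bD k (1 : B)

lemma aD (a : A) : (a : C) ∈ D A B 1 := by
  have := mem_D_of_gen (k := 1) (1 : B) [(a, (1 : B))] (by simp)
  simpa [word] using this

lemma D_mono {i j : ℕ} (h : i ≤ j) : D A B i ≤ D A B j := by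
  apply Submodule.span_mono
  rintro x ⟨b₀, L, hL, rfl⟩
  exact ⟨b₀, L, hL.trans h, rfl⟩

lemma D_mul {i j : ℕ} {x y : C} (hx : x ∈ D A B i) (hy : y ∈ D A B j) :
    x * y ∈ D A B (i + j) := by
  have hle : D A B i * D A B j ≤ D A B (i + j) := by
    rw [D, D, Submodule.span_mul_span]
    apply Submodule.span_le.mpr
    rintro z hz
    rw [Set.mem_mul] at hz
    obtain ⟨u, ⟨b₀, L, hL, rfl⟩, v, ⟨b₀', L', hL', rfl⟩, rfl⟩ := hz
    rcases List.eq_nil_or_concat L with rfl | ⟨K, ⟨a, b⟩, rfl⟩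
    · refine Submodule.subset_span ⟨b₀ * b₀', L', by omega, ?_⟩
      simp [word_nil, mul_assoc]
    · simp only [List.concat_eq_append] at hL ⊢
      refine Submodule.subset_span ⟨b₀, K ++ [(a, b * b₀')] ++ L', ?_, ?_⟩
      · simp only [List.length_append, List.length_singleton] at hL hL' ⊢
        omega
      · simp only [word_append, word_nil, word_cons, MulMemClass.coe_mul, mul_one]
        simp [mul_assoc]
  exact hle (Submodule.mul_mem_mul hx hy)

lemma memD_le {x : C} {i j : ℕ} (hx : x ∈ D A B i) (h : i ≤ j) : x ∈ D A B j :=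
  D_mono h hx

lemma word_D (L : List (A × B)) : word L ∈ D A B L.length := by
  induction L with
  | nil => exact one_D 0
  | cons p L ih =>
    rw [word_cons]
    have : (p.1 : C) * (p.2 : C) * word L ∈ D A B (1 + 0 + L.length) :=
      D_mul (D_mul (aD p.1) (bD 0 p.2)) ih
    exact memD_le this (by simp only [List.length_cons]; omega)

lemma oa_tb_D (ρ : A →ₗ[ℂ] B) (ψ : B →ₗ[ℂ] A) (a : A) (b : B) :
    oa ρ a * tb ψ b ∈ D A B 1 := by
  have h : oa ρ a * tb ψ b
      = (a : C) * (b : C) - ((a * ψ b : A) : C) - ((ρ a * b : B) : C)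
        + ((ρ a : C) * ((ψ b : A) : C)) := by
    simp only [oa, tb, MulMemClass.coe_mul]
    noncomm_ring
  rw [h]
  refine add_mem (sub_mem (sub_mem ?_ ?_) ?_) ?_
  · exact memD_le (D_mul (aD a) (bD 0 b)) (by simp)
  · exact aD _
  · exact memD_le (bD 0 _) (by simp)
  · exact memD_le (D_mul (bD 0 (ρ a)) (aD (ψ b))) (by simp)

lemma chain_D (ρ : A →ₗ[ℂ] B) (ψ : B →ₗ[ℂ] A) (L : List (A × B)) :
    chain ρ ψ L ∈ D A B L.length := by
  induction L with
  | nil => exact one_D 0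
  | cons p L ih =>
    have : chain ρ ψ (p :: L) = (oa ρ p.1 * tb ψ p.2) * chain ρ ψ L := by simp [chain]
    rw [this]
    exact memD_le (D_mul (oa_tb_D ρ ψ p.1 p.2) ih) (by simp only [List.length_cons]; omega)

section

variable (e : C →ₗ[ℂ] C) (ρ : A →ₗ[ℂ] B) (ψ : B →ₗ[ℂ] A)
variable (hbm : ∀ (b₁ b₂ : B) (x : C), e ((b₁ : C) * x * (b₂ : C)) = (b₁ : C) * e x * (b₂ : C))

include hbm in
lemma T_lmul {x : C} (b : B) (hx : x ∈ T B e) : (b : C) * x ∈ T B e := by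
  obtain ⟨b', hb'⟩ := hx
  refine ⟨b * b', ?_⟩
  have h1 := hbm b 1 x
  have h2 := hbm b 1 (b' : C)
  simp only [OneMemClass.coe_one, mul_one] at h1 h2
  rw [h1, hb', ← h2, MulMemClass.coe_mul]

include hbm in
lemma T_rmul {x : C} (b : B) (hx : x ∈ T B e) : x * (b : C) ∈ T B e := by
  obtain ⟨b', hb'⟩ := hx
  refine ⟨b' * b, ?_⟩
  have h1 := hbm 1 b x
  have h2 := hbm 1 b (b' : C)
  simp only [OneMemClass.coe_one, one_mul] at h1 h2
  rw [h1, hb', ← h2, MulMemClass.coe_mul]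

lemma T_of_zero {x : C} (hx : e x = 0) : x ∈ T B e := ⟨0, by simp [hx]⟩

variable (hvan : ∀ (n : ℕ) (a : Fin (n + 1) → A) (b : Fin n → B),
    e ((List.ofFn (fun i : Fin n =>
        ((a i.castSucc : C) - ((ρ (a i.castSucc) : B) : C)) *
          ((b i : C) - ((ψ (b i) : A) : C)))).prod *
      ((a (Fin.last n) : C) - ((ρ (a (Fin.last n)) : B) : C))) = 0)

include hvan in
lemma chain_vanish (L : List (A × B)) (a' : A) :
    e (chain ρ ψ L * oa ρ a') = 0 := by
  have h := hvan L.length (Fin.snoc (fun i => (L.get i).1) a') (fun i => (L.get i).2)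
  simp only [Fin.snoc_castSucc, Fin.snoc_last] at h
  have heq : (List.ofFn fun i : Fin L.length =>
      (((L.get i).1 : C) - ((ρ (L.get i).1 : B) : C)) *
        (((L.get i).2 : C) - ((ψ (L.get i).2 : A) : C))) =
      L.map fun p => oa ρ p.1 * tb ψ p.2 := by
    conv_rhs => rw [← List.ofFn_get L]
    rw [List.map_ofFn]
    rfl
  rw [heq] at h
  exact h

/-- merge lemma: an `A`-element followed by a word and a final `A`-element. -/
lemma merge_D {x : C} {k : ℕ} (hx : x ∈ D A B k) (c : A) (Lr : List (A × B)) (a' : A) :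
    x * ((c : C) * word Lr) * (a' : C) ∈ D A B (k + Lr.length + 1) := by
  cases Lr with
  | nil =>
    have hid : x * ((c : C) * word ([] : List (A × B))) * (a' : C) = x * ((c * a' : A) : C) := by
      simp [word_nil, mul_assoc]
    rw [hid]
    exact memD_le (D_mul hx (aD (c * a'))) (by simp)
  | cons p Lr' =>
    obtain ⟨a₂, b₂⟩ := p
    have hid : x * ((c : C) * word ((a₂, b₂) :: Lr')) * (a' : C)
        = x * ((c * a₂ : A) : C) * (b₂ : C) * word Lr' * (a' : C) := by
      rw [word_cons, MulMemClass.coe_mul]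
      simp [mul_assoc]
    rw [hid]
    have : x * ((c * a₂ : A) : C) * (b₂ : C) * word Lr' * (a' : C)
        ∈ D A B (k + 1 + 0 + Lr'.length + 1) :=
      D_mul (D_mul (D_mul (D_mul hx (aD _)) (bD 0 b₂)) (word_D Lr')) (aD a')
    exact memD_le this (by simp only [List.length_cons]; omega)

include hvan in
lemma traverse (n : ℕ) (hn : ∀ x ∈ D A B n, x ∈ T B e) :
    ∀ (Lr Lc : List (A × B)) (a' : A), Lc.length + Lr.length = n →
      chain ρ ψ Lc * word Lr * (a' : C) ∈ T B e := by
  intro Lr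
  induction Lr with
  | nil =>
    intro Lc a' hlen
    have hid : chain ρ ψ Lc * word ([] : List (A × B)) * (a' : C)
        = chain ρ ψ Lc * oa ρ a' + chain ρ ψ Lc * ((ρ a' : B) : C) := by
      simp only [word_nil, mul_one, oa]
      noncomm_ring
    rw [hid]
    refine add_mem (T_of_zero e (chain_vanish e ρ ψ hvan Lc a')) ?_
    refine hn _ (memD_le (D_mul (chain_D ρ ψ Lc) (bD 0 (ρ a'))) ?_)
    simpa using hlen.le
  | cons p Lr' ih =>
    intro Lc a' hlen
    obtain ⟨a₁, b₁⟩ := p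
    simp only [List.length_cons] at hlen
    -- decomposition of a₁ b₁
    have hsplit : (a₁ : C) * (b₁ : C)
        = oa ρ a₁ * tb ψ b₁ + (((a₁ * ψ b₁ : A) : C) - ((ρ a₁ : B) : C) * ((ψ b₁ : A) : C))
          + ((ρ a₁ * b₁ : B) : C) := by
      simp only [oa, tb, MulMemClass.coe_mul]
      noncomm_ring
    have hid : chain ρ ψ Lc * word ((a₁, b₁) :: Lr') * (a' : C)
        = chain ρ ψ (Lc ++ [(a₁, b₁)]) * word Lr' * (a' : C)
          + (chain ρ ψ Lc * (((a₁ * ψ b₁ : A) : C) * word Lr') * (a' : C)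
              - (chain ρ ψ Lc * ((ρ a₁ : B) : C)) * (((ψ b₁ : A) : C) * word Lr') * (a' : C))
          + chain ρ ψ Lc * (((ρ a₁ * b₁ : B) : C) * word Lr') * (a' : C) := by
      rw [word_cons, chain_append]
      simp only [chain, List.map_cons, List.map_nil, List.prod_cons, List.prod_nil, mul_one]
      rw [hsplit]
      noncomm_ring
    rw [hid]
    refine add_mem (add_mem ?_ (sub_mem ?_ ?_)) ?_
    · refine ih (Lc ++ [(a₁, b₁)]) a' ?_
      simp only [List.length_append, List.length_singleton]
      omega
    · refine hn _ (memD_le (merge_D (chain_D ρ ψ Lc) (a₁ * ψ b₁) Lr' a') (by omega))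
    · have hmem : chain ρ ψ Lc * ((ρ a₁ : B) : C) ∈ D A B Lc.length :=
        memD_le (D_mul (chain_D ρ ψ Lc) (bD 0 (ρ a₁))) (by omega)
      refine hn _ (memD_le (merge_D hmem (ψ b₁) Lr' a') (by omega))
    · have : chain ρ ψ Lc * (((ρ a₁ * b₁ : B) : C) * word Lr') * (a' : C)
          ∈ D A B (Lc.length + (0 + Lr'.length) + 1) :=
        D_mul (D_mul (chain_D ρ ψ Lc) (D_mul (bD 0 (ρ a₁ * b₁)) (word_D Lr'))) (aD a')
      exact hn _ (memD_le this (by omega))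

include hbm hvan in
lemma D_le_T : ∀ m, ∀ x ∈ D A B m, x ∈ T B e := by
  intro m
  induction m using Nat.strong_induction_on with
  | _ m IH =>
    have : D A B m ≤ T B e := by
      apply Submodule.span_le.mpr
      rintro x ⟨b₀, L, hL, rfl⟩
      rcases Nat.lt_or_ge L.length m with hlt | hge
      · exact IH L.length hlt _ (mem_D_of_gen b₀ L le_rfl)
      · have hLm : L.length = m := le_antisymm hL hge
        rcases List.eq_nil_or_concat L with rfl | ⟨K, ⟨a, b⟩, rfl⟩
        · refine ⟨b₀, ?_⟩
          simp [word_nil]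
        · simp only [List.concat_eq_append] at hLm ⊢
          have hm1 : m - 1 < m := by
            simp only [List.length_append, List.length_singleton] at hLm
            omega
          have hK : K.length = m - 1 := by
            simp only [List.length_append, List.length_singleton] at hLm
            omega
          have hcore : word K * (a : C) ∈ T B e := by
            have := traverse e ρ ψ hvan (m - 1) (IH (m - 1) hm1) K [] a (by simp [hK])
            simpa [chain_nil] using this
          have h2 : word K * (a : C) * (b : C) ∈ T B e := T_rmul e hbm b hcore
          have hid : (b₀ : C) * word (K ++ [(a, b)])
              = (b₀ : C) * (word K * (a : C) * (b : C)) := by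
            rw [word_append, word_cons, word_nil]
            simp [mul_assoc]
          rw [hid]
          exact T_lmul e hbm b₀ h2
    exact fun x hx => this hx

end

/-- the union of the `D`s as a subalgebra -/
def Salg (A B : Subalgebra ℂ C) : Subalgebra ℂ C where
  carrier := {x | ∃ m, x ∈ D A B m}
  mul_mem' := by
    rintro x y ⟨i, hi⟩ ⟨j, hj⟩
    exact ⟨i + j, D_mul hi hj⟩
  add_mem' := by
    rintro x y ⟨i, hi⟩ ⟨j, hj⟩
    exact ⟨max i j, add_mem (memD_le hi (le_max_left _ _)) (memD_le hj (le_max_right _ _))⟩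
  one_mem' := ⟨0, one_D 0⟩
  zero_mem' := ⟨0, zero_mem _⟩
  algebraMap_mem' := by
    intro c
    refine ⟨0, ?_⟩
    have : (algebraMap ℂ C c) = ((algebraMap ℂ B c : B) : C) := rfl
    rw [this]
    exact bD 0 _

lemma sup_le_Salg : A ⊔ B ≤ Salg A B := by
  apply sup_le
  · intro x hx
    exact ⟨1, by simpa using aD (⟨x, hx⟩ : A)⟩
  · intro x hx
    exact ⟨0, by simpa using bD 0 (⟨x, hx⟩ : B)⟩


end RL7Aux

theorem stmt7 {C : Type*} [Ring C] [Algebra ℂ C] (A B : Subalgebra ℂ C)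
    (e : C →ₗ[ℂ] C) (ρ : A →ₗ[ℂ] B) (ψ : B →ₗ[ℂ] A)
    (h : RightLiberated A B e ρ ψ) :
    e '' ((A ⊔ B : Subalgebra ℂ C) : Set C) = e '' (B : Set C) := by
  obtain ⟨hbm, hvan⟩ := h
  apply Set.Subset.antisymm
  · rintro _ ⟨x, hx, rfl⟩
    obtain ⟨m, hm⟩ := RL7Aux.sup_le_Salg hx
    obtain ⟨b, hb⟩ := RL7Aux.D_le_T e ρ ψ hbm hvan m x hm
    exact ⟨(b : C), b.2, hb.symm⟩
  · apply Set.image_mono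
    exact fun x hx => (le_sup_right : B ≤ A ⊔ B) hx
end

section
/- Suppose 𝔢 and 𝔢′ are two ℂ-linear maps 𝒞 → 𝒞 such that the pair (A, B) is right-liberated with respect to (𝔢, ρ, ψ) and also right-liberated with respect to (𝔢′, ρ, ψ) (for the same maps ρ and ψ), and suppose 𝔢(1) = 𝔢′(1). Then 𝔢 and 𝔢′ agree on the subalgebra ⟨A, B⟩ generated by A and B. -/
namespace Stmt9Aux

variable {C : Type*} [Ring C] [Algebra ℂ C] {A B : Subalgebra ℂ C}

/-- Items: uncentered `A`-letters, uncentered `B`-letters, centered `A`-letters. -/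
inductive It (A B : Subalgebra ℂ C) : Type _ where
  | ia : A → It A B
  | ib : B → It A B
  | ic : A → It A B

variable (ρ : A →ₗ[ℂ] B) (ψ : B →ₗ[ℂ] A)

def ctA (a : A) : C := (a : C) - ((ρ a : B) : C)

def ctB (b : B) : C := (b : C) - ((ψ b : A) : C)

def itVal : It A B → C
  | .ia a => (a : C)
  | .ib b => (b : C)
  | .ic a => ctA ρ a

def preVal (l : List (A × B)) : C := (l.map fun q => ctA ρ q.1 * ctB ψ q.2).prod

def cword (l : List (A × B)) (a : A) : C := preVal ρ ψ l * ctA ρ a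

def cfgVal (p : List (A × B)) (items : List (It A B)) : C :=
  preVal ρ ψ p * (items.map (itVal ρ)).prod

lemma preVal_nil : preVal ρ ψ ([] : List (A × B)) = 1 := rfl

lemma preVal_concat (l : List (A × B)) (q : A × B) :
    preVal ρ ψ (l ++ [q]) = preVal ρ ψ l * (ctA ρ q.1 * ctB ψ q.2) := by
  simp [preVal]

lemma cfgVal_nil_nil : cfgVal ρ ψ ([] : List (A × B)) ([] : List (It A B)) = 1 := by
  simp [cfgVal, preVal]

section D

variable (D : C →ₗ[ℂ] C)
  (hD1 : D 1 = 0)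
  (hDb : ∀ (b₁ b₂ : B) (x : C), D ((b₁ : C) * x * (b₂ : C)) = (b₁ : C) * D x * (b₂ : C))
  (hDcw : ∀ (l : List (A × B)) (a : A), D (cword ρ ψ l a) = 0)

include hDb in
lemma hDl (b : B) (x : C) : D ((b : C) * x) = (b : C) * D x := by
  have := hDb b 1 x
  simpa using this

include hDb in
lemma hDr (b : B) (x : C) : D (x * (b : C)) = D x * (b : C) := by
  have := hDb 1 b x
  simpa using this

include hD1 hDb hDcw in
/-- The pop lemma: configurations headed by an uncentered `B`-letter, by induction
on the prefix, given an oracle for all configurations of smaller weight. -/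
lemma aux1 (p : List (A × B)) :
    ∀ (β : B) (r : List (It A B)),
      (∀ (q : List (A × B)) (items : List (It A B)),
        2 * q.length + items.length ≤ 2 * p.length + r.length →
        D (cfgVal ρ ψ q items) = 0) →
      D (cfgVal ρ ψ p (.ib β :: r)) = 0 := by
  induction p using List.reverseRecOn with
  | nil =>
    intro β r O
    have key : cfgVal ρ ψ ([] : List (A × B)) (.ib β :: r)
        = (β : C) * cfgVal ρ ψ [] r := by
      simp [cfgVal, preVal, itVal, mul_assoc]
    rw [key, hDl D hDb, O [] r (by simp)]
    simp
  | append_singleton p' q IH =>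
    obtain ⟨ak, bk⟩ := q
    intro β r O
    have key : cfgVal ρ ψ (p' ++ [(ak, bk)]) (.ib β :: r)
        = cfgVal ρ ψ p' (.ic ak :: .ib (bk * β) :: r)
          - cfgVal ρ ψ p' (.ia (ak * ψ bk) :: .ib β :: r)
          + cfgVal ρ ψ p' (.ib (ρ ak) :: .ia (ψ bk) :: .ib β :: r) := by
      simp only [cfgVal, preVal_concat, itVal, List.map_cons, List.prod_cons,
        MulMemClass.coe_mul, ctA, ctB]
      noncomm_ring
    rw [key, map_add, map_sub,
      O p' (.ic ak :: .ib (bk * β) :: r) (by simp; omega),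
      O p' (.ia (ak * ψ bk) :: .ib β :: r) (by simp; omega),
      IH (ρ ak) (.ia (ψ bk) :: .ib β :: r)
        (fun q items hq => O q items (by simp at hq ⊢; omega))]
    simp

include hD1 hDb hDcw in
lemma grand : ∀ (N : ℕ) (p : List (A × B)) (items : List (It A B)),
    2 * p.length + items.length ≤ N → D (cfgVal ρ ψ p items) = 0 := by
  intro N
  induction N using Nat.strong_induction_on with
  | _ N IHN =>
  have Houter : ∀ (p : List (A × B)) (items : List (It A B)),
      2 * p.length + items.length < N → D (cfgVal ρ ψ p items) = 0 := by
    intro p items hlt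
    exact IHN (2 * p.length + items.length) hlt p items le_rfl
  have Hib : ∀ (p : List (A × B)) (β : B) (r : List (It A B)),
      2 * p.length + 1 + r.length ≤ N → D (cfgVal ρ ψ p (.ib β :: r)) = 0 := by
    intro p β r hlen
    exact aux1 ρ ψ D hD1 hDb hDcw p β r (fun q items hq => Houter q items (by omega))
  have HR0 : ∀ (p : List (A × B)), 2 * p.length ≤ N → D (cfgVal ρ ψ p []) = 0 := by
    intro p hlen
    rcases List.eq_nil_or_concat p with rfl | ⟨p', ⟨ak, bk⟩, rfl⟩
    · rw [cfgVal_nil_nil]; exact hD1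
    · rw [List.concat_eq_append] at hlen ⊢
      have key : cfgVal ρ ψ (p' ++ [(ak, bk)]) ([] : List (It A B))
          = cword ρ ψ p' ak * (bk : C)
            - cfgVal ρ ψ p' [.ia (ak * ψ bk)]
            + cfgVal ρ ψ p' [.ib (ρ ak), .ia (ψ bk)] := by
        simp only [cfgVal, cword, preVal_concat, itVal, List.map_cons, List.prod_cons,
          List.map_nil, List.prod_nil, MulMemClass.coe_mul, ctA, ctB]
        noncomm_ring
      rw [key, map_add, map_sub, hDr D hDb, hDcw,
        Houter p' [.ia (ak * ψ bk)] (by simp at hlen ⊢; omega),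
        Hib p' (ρ ak) [.ia (ψ bk)] (by simp at hlen ⊢; omega)]
      simp
  have Hmain : ∀ (M : ℕ) (p : List (A × B)) (items : List (It A B)),
      2 * p.length + items.length ≤ N → items.length ≤ M → D (cfgVal ρ ψ p items) = 0 := by
    intro M
    induction M with
    | zero =>
      intro p items hN hM
      obtain rfl : items = [] := List.eq_nil_of_length_eq_zero (Nat.le_zero.mp hM)
      exact HR0 p (by simpa using hN)
    | succ M IHM =>
      -- handler for configurations `ic x :: ib β :: r`
      have HicIb : ∀ (p : List (A × B)) (x : A) (β : B) (r : List (It A B)),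
          2 * p.length + 2 + r.length ≤ N → r.length ≤ M →
          D (cfgVal ρ ψ p (.ic x :: .ib β :: r)) = 0 := by
        intro p x β r hN hM
        have key : cfgVal ρ ψ p (.ic x :: .ib β :: r)
            = cfgVal ρ ψ (p ++ [(x, β)]) r
              + cfgVal ρ ψ p (.ia (x * ψ β) :: r)
              - cfgVal ρ ψ p (.ib (ρ x) :: .ia (ψ β) :: r) := by
          simp only [cfgVal, preVal_concat, itVal, List.map_cons, List.prod_cons,
            MulMemClass.coe_mul, ctA, ctB]
          noncomm_ring
        rw [key, map_sub, map_add,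
          IHM (p ++ [(x, β)]) r (by simp; omega) hM,
          Houter p (.ia (x * ψ β) :: r) (by simp; omega),
          Hib p (ρ x) (.ia (ψ β) :: r) (by simp; omega)]
        simp
      -- handler for configurations `ia c :: ib β :: r`
      have HiaIb : ∀ (p : List (A × B)) (c : A) (β : B) (r : List (It A B)),
          2 * p.length + 2 + r.length ≤ N → r.length ≤ M →
          D (cfgVal ρ ψ p (.ia c :: .ib β :: r)) = 0 := by
        intro p c β r hN hM
        have key : cfgVal ρ ψ p (.ia c :: .ib β :: r)
            = cfgVal ρ ψ (p ++ [(c, β)]) r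
              + cfgVal ρ ψ p (.ia (c * ψ β) :: r)
              + cfgVal ρ ψ p (.ib (ρ c * β) :: r)
              - cfgVal ρ ψ p (.ib (ρ c) :: .ia (ψ β) :: r) := by
          simp only [cfgVal, preVal_concat, itVal, List.map_cons, List.prod_cons,
            MulMemClass.coe_mul, ctA, ctB]
          noncomm_ring
        rw [key, map_sub, map_add, map_add,
          IHM (p ++ [(c, β)]) r (by simp; omega) hM,
          Houter p (.ia (c * ψ β) :: r) (by simp; omega),
          Hib p (ρ c * β) r (by omega),
          Hib p (ρ c) (.ia (ψ β) :: r) (by simp; omega)]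
        simp
      intro p items hN hM
      match items with
      | [] => exact HR0 p (by simpa using hN)
      | .ib β :: r =>
        exact Hib p β r (by simp at hN; omega)
      | .ic x :: r =>
        match r with
        | [] =>
          have key : cfgVal ρ ψ p [.ic x] = cword ρ ψ p x := by
            simp [cfgVal, cword, itVal]
          rw [key]; exact hDcw p x
        | .ib β :: r' =>
          exact HicIb p x β r' (by simp at hN; omega) (by simp at hM; omega)
        | .ia c :: r' =>
          have key : cfgVal ρ ψ p (.ic x :: .ia c :: r')
              = cfgVal ρ ψ p (.ia (x * c) :: r')
                - cfgVal ρ ψ p (.ib (ρ x) :: .ia c :: r') := by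
            simp only [cfgVal, itVal, List.map_cons, List.prod_cons,
              MulMemClass.coe_mul, ctA, ctB]
            noncomm_ring
          rw [key, map_sub,
            Houter p (.ia (x * c) :: r') (by simp at hN ⊢; omega),
            Hib p (ρ x) (.ia c :: r') (by simp at hN ⊢; omega)]
          simp
        | .ic y :: r' =>
          have key : cfgVal ρ ψ p (.ic x :: .ic y :: r')
              = cfgVal ρ ψ p (.ia (x * y) :: r')
                - cfgVal ρ ψ p (.ib (ρ x) :: .ia y :: r')
                - cfgVal ρ ψ p (.ic x :: .ib (ρ y) :: r') := by
            simp only [cfgVal, itVal, List.map_cons, List.prod_cons,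
              MulMemClass.coe_mul, ctA, ctB]
            noncomm_ring
          rw [key, map_sub, map_sub,
            Houter p (.ia (x * y) :: r') (by simp at hN ⊢; omega),
            Hib p (ρ x) (.ia y :: r') (by simp at hN ⊢; omega),
            HicIb p x (ρ y) r' (by simp at hN ⊢; omega) (by simp at hM ⊢; omega)]
          simp
      | .ia c :: r =>
        match r with
        | [] =>
          have key : cfgVal ρ ψ p [.ia c]
              = cword ρ ψ p c + cfgVal ρ ψ p [] * ((ρ c : B) : C) := by
            simp only [cfgVal, cword, itVal, List.map_cons, List.prod_cons,
              List.map_nil, List.prod_nil, ctA]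
            noncomm_ring
          rw [key, map_add, hDcw, hDr D hDb, HR0 p (by simp at hN; omega)]
          simp
        | .ib β :: r' =>
          exact HiaIb p c β r' (by simp at hN; omega) (by simp at hM; omega)
        | .ia c₂ :: r' =>
          have key : cfgVal ρ ψ p (.ia c :: .ia c₂ :: r')
              = cfgVal ρ ψ p (.ia (c * c₂) :: r') := by
            simp only [cfgVal, itVal, List.map_cons, List.prod_cons,
              MulMemClass.coe_mul]
            noncomm_ring
          rw [key]
          exact Houter p (.ia (c * c₂) :: r') (by simp at hN ⊢; omega)
        | .ic y :: r' =>
          have key : cfgVal ρ ψ p (.ia c :: .ic y :: r')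
              = cfgVal ρ ψ p (.ia (c * y) :: r')
                - cfgVal ρ ψ p (.ia c :: .ib (ρ y) :: r') := by
            simp only [cfgVal, itVal, List.map_cons, List.prod_cons,
              MulMemClass.coe_mul, ctA, ctB]
            noncomm_ring
          rw [key, map_sub,
            Houter p (.ia (c * y) :: r') (by simp at hN ⊢; omega),
            HiaIb p c (ρ y) r' (by simp at hN ⊢; omega) (by simp at hM ⊢; omega)]
          simp
  exact fun p items h => Hmain items.length p items h le_rfl

end D

end Stmt9Aux

theorem stmt9 {C : Type*} [Ring C] [Algebra ℂ C] (A B : Subalgebra ℂ C)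
    (e e' : C →ₗ[ℂ] C) (ρ : A →ₗ[ℂ] B) (ψ : B →ₗ[ℂ] A)
    (h : RightLiberated A B e ρ ψ) (h' : RightLiberated A B e' ρ ψ)
    (hone : e 1 = e' 1) :
    ∀ x ∈ (A ⊔ B : Subalgebra ℂ C), e x = e' x := by
  classical
  set D : C →ₗ[ℂ] C := e - e' with hD
  suffices hfinal : ∀ x ∈ (A ⊔ B : Subalgebra ℂ C), D x = 0 by
    intro x hx
    have := hfinal x hx
    simpa [hD, sub_eq_zero] using this
  -- basic properties of D
  have hD1 : D 1 = 0 := by simp [hD, sub_eq_zero, hone]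
  have hDb : ∀ (b₁ b₂ : B) (x : C), D ((b₁ : C) * x * (b₂ : C)) = (b₁ : C) * D x * (b₂ : C) := by
    intro b₁ b₂ x
    simp [hD, h.1 b₁ b₂ x, h'.1 b₁ b₂ x, mul_sub, sub_mul]
  -- the hypothesis words, in list form
  have hcwgen : ∀ (f : C →ₗ[ℂ] C), RightLiberated A B f ρ ψ →
      ∀ (l : List (A × B)) (aL : A), f (Stmt9Aux.cword ρ ψ l aL) = 0 := by
    intro f hf l aL
    set a : Fin (l.length + 1) → A :=
      fun i => if h : (i : ℕ) < l.length then (l.get ⟨i, h⟩).1 else aL with ha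
    have key := hf.2 l.length a (fun i => (l.get i).2)
    have h1 : ∀ i : Fin l.length, a i.castSucc = (l.get i).1 := by
      intro i
      simp [ha, i.isLt]
    have h2 : a (Fin.last l.length) = aL := by simp [ha]
    simp only [h1, h2] at key
    have hlist : (l.map fun q => Stmt9Aux.ctA ρ q.1 * Stmt9Aux.ctB ψ q.2)
        = List.ofFn (fun i : Fin l.length =>
            Stmt9Aux.ctA ρ (l.get i).1 * Stmt9Aux.ctB ψ (l.get i).2) := by
      conv_lhs => rw [← List.ofFn_get l]
      rw [List.map_ofFn]
      rfl
    show f ((l.map fun q => Stmt9Aux.ctA ρ q.1 * Stmt9Aux.ctB ψ q.2).prod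
      * Stmt9Aux.ctA ρ aL) = 0
    rw [hlist]
    simpa only [Stmt9Aux.ctA, Stmt9Aux.ctB] using key
  have hDcw : ∀ (l : List (A × B)) (aL : A), D (Stmt9Aux.cword ρ ψ l aL) = 0 := by
    intro l aL
    simp [hD, hcwgen e h l aL, hcwgen e' h' l aL]
  -- the spanning submodule
  set S : Set C := {x | ∃ items : List (Stmt9Aux.It A B), x = Stmt9Aux.cfgVal ρ ψ [] items}
    with hS
  have hmul : ∀ (i₁ i₂ : List (Stmt9Aux.It A B)),
      Stmt9Aux.cfgVal ρ ψ ([] : List (A × B)) i₁ * Stmt9Aux.cfgVal ρ ψ ([] : List (A × B)) i₂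
        = Stmt9Aux.cfgVal ρ ψ ([] : List (A × B)) (i₁ ++ i₂) := by
    intro i₁ i₂
    simp [Stmt9Aux.cfgVal, Stmt9Aux.preVal]
  set M : Submodule ℂ C := Submodule.span ℂ S with hM
  have hMmul : ∀ x ∈ M, ∀ y ∈ M, x * y ∈ M := by
    intro x hx y hy
    induction hx using Submodule.span_induction generalizing y with
    | mem a ha =>
      induction hy using Submodule.span_induction with
      | mem b hb =>
        obtain ⟨i₁, rfl⟩ := ha
        obtain ⟨i₂, rfl⟩ := hb
        rw [hmul]
        exact Submodule.subset_span ⟨_, rfl⟩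
      | zero => simpa using Submodule.zero_mem M
      | add u v _ _ hu hv => rw [mul_add]; exact Submodule.add_mem M hu hv
      | smul c u _ hu => rw [mul_smul_comm]; exact Submodule.smul_mem M c hu
    | zero => simpa using Submodule.zero_mem M
    | add u v _ _ hu hv =>
      rw [add_mul]; exact Submodule.add_mem M (hu y hy) (hv y hy)
    | smul c u _ hu => rw [smul_mul_assoc]; exact Submodule.smul_mem M c (hu y hy)
  have hone' : (1 : C) ∈ M := by
    apply Submodule.subset_span
    exact ⟨[], (Stmt9Aux.cfgVal_nil_nil ρ ψ).symm⟩
  set T : Subalgebra ℂ C := M.toSubalgebra hone' (fun x y hx hy => hMmul x hx y hy) with hT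
  have hsub : (A ⊔ B : Subalgebra ℂ C) ≤ T := by
    apply sup_le
    · intro a ha
      apply Submodule.subset_span
      exact ⟨[.ia ⟨a, ha⟩], by simp [Stmt9Aux.cfgVal, Stmt9Aux.preVal, Stmt9Aux.itVal]⟩
    · intro b hb
      apply Submodule.subset_span
      exact ⟨[.ib ⟨b, hb⟩], by simp [Stmt9Aux.cfgVal, Stmt9Aux.preVal, Stmt9Aux.itVal]⟩
  have hker : ∀ y ∈ M, D y = 0 := by
    intro y hy
    induction hy using Submodule.span_induction with
    | mem a ha =>
      obtain ⟨items, rfl⟩ := ha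
      exact Stmt9Aux.grand ρ ψ D hD1 hDb hDcw (2 * ([] : List (A × B)).length + items.length)
        [] items le_rfl
    | zero => simp
    | add u v _ _ hu hv => simp [map_add, hu, hv]
    | smul c u _ hu => simp [map_smul, hu]
  intro x hx
  exact hker x (hsub hx)
end

section
/- Suppose the pair (A, B) is right-liberated in 𝒞 with respect to (𝔢, ρ, ψ). Then for every element x of the subalgebra ⟨A, B⟩ generated by A and B, there exists b ∈ B with 𝔢(x) = b · 𝔢(1). -/
namespace RLib

variable {C : Type*} [Ring C] [Algebra ℂ C] {A B : Subalgebra ℂ C}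

def cw (ρ : A →ₗ[ℂ] B) (a : A) : C := (a : C) - ((ρ a : B) : C)
def tw (ψ : B →ₗ[ℂ] A) (b : B) : C := (b : C) - ((ψ b : A) : C)

def v (ρ : A →ₗ[ℂ] B) (ψ : B →ₗ[ℂ] A) : List (A × B) → A → C
  | [], aL => cw ρ aL
  | p :: l, aL => cw ρ p.1 * (tw ψ p.2 * v ρ ψ l aL)

def tp (ρ : A →ₗ[ℂ] B) : List (B × A) → C
  | [] => 1
  | p :: q => (p.1 : C) * (cw ρ p.2 * tp ρ q)

def F (ρ : A →ₗ[ℂ] B) (ψ : B →ₗ[ℂ] A) : Submodule ℂ C :=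
  Submodule.span ℂ {x | (∃ b : B, x = (b : C)) ∨
    ∃ (b₀ b₁ : B) (l : List (A × B)) (aL : A), x = (b₀ : C) * v ρ ψ l aL * (b₁ : C)}

variable (ρ : A →ₗ[ℂ] B) (ψ : B →ₗ[ℂ] A)

lemma v_snoc (l : List (A × B)) (a : A) (b : B) (aL : A) :
    v ρ ψ (l ++ [(a, b)]) aL = v ρ ψ l a * (tw ψ b * cw ρ aL) := by
  induction l with
  | nil => simp [v]
  | cons p l ih => simp [v, ih, mul_assoc]

lemma memB (b : B) : (b : C) ∈ F ρ ψ :=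
  Submodule.subset_span (Or.inl ⟨b, rfl⟩)

lemma mem1 : (1 : C) ∈ F ρ ψ := by
  simpa using memB ρ ψ 1

lemma memW (b₀ b₁ : B) (l : List (A × B)) (aL : A) :
    (b₀ : C) * v ρ ψ l aL * (b₁ : C) ∈ F ρ ψ :=
  Submodule.subset_span (Or.inr ⟨b₀, b₁, l, aL, rfl⟩)

lemma memW1 (l : List (A × B)) (aL : A) : v ρ ψ l aL ∈ F ρ ψ := by
  simpa using memW ρ ψ 1 1 l aL

lemma memWr (l : List (A × B)) (aL : A) (b : B) : v ρ ψ l aL * (b : C) ∈ F ρ ψ := by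
  simpa using memW ρ ψ 1 b l aL

lemma memWl (b : B) (l : List (A × B)) (aL : A) : (b : C) * v ρ ψ l aL ∈ F ρ ψ := by
  simpa using memW ρ ψ b 1 l aL

lemma Bmul (b : B) {x : C} (hx : x ∈ F ρ ψ) : (b : C) * x ∈ F ρ ψ := by
  induction hx using Submodule.span_induction with
  | mem y hy =>
    rcases hy with ⟨b', rfl⟩ | ⟨b₀, b₁, l, aL, rfl⟩
    · simpa using memB ρ ψ (b * b')
    · have : (b : C) * ((b₀ : C) * v ρ ψ l aL * (b₁ : C))
          = ((b * b₀ : B) : C) * v ρ ψ l aL * (b₁ : C) := by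
        push_cast; noncomm_ring
      rw [this]; exact memW ρ ψ _ _ _ _
  | zero => simpa using (F ρ ψ).zero_mem
  | add x y hx hy ihx ihy => simpa [mul_add] using (F ρ ψ).add_mem ihx ihy
  | smul r x hx ihx => simpa [mul_smul_comm] using (F ρ ψ).smul_mem r ihx

lemma BmulR (b : B) {x : C} (hx : x ∈ F ρ ψ) : x * (b : C) ∈ F ρ ψ := by
  induction hx using Submodule.span_induction with
  | mem y hy =>
    rcases hy with ⟨b', rfl⟩ | ⟨b₀, b₁, l, aL, rfl⟩
    · simpa using memB ρ ψ (b' * b)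
    · have : (b₀ : C) * v ρ ψ l aL * (b₁ : C) * (b : C)
          = (b₀ : C) * v ρ ψ l aL * ((b₁ * b : B) : C) := by
        push_cast; noncomm_ring
      rw [this]; exact memW ρ ψ _ _ _ _
  | zero => simpa using (F ρ ψ).zero_mem
  | add x y hx hy ihx ihy => simpa [add_mul] using (F ρ ψ).add_mem ihx ihy
  | smul r x hx ihx => simpa [smul_mul_assoc] using (F ρ ψ).smul_mem r ihx

set_option maxHeartbeats 2000000 in
/-- The master combinatorial lemma, by strong induction on the total length. -/
lemma grand : ∀ cl : ℕ,
    (∀ (l : List (A × B)) (aL : A) (q : List (B × A)), l.length + 1 + q.length ≤ cl →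
      v ρ ψ l aL * tp ρ q ∈ F ρ ψ)
    ∧ (∀ q : List (B × A), q.length ≤ cl → tp ρ q ∈ F ρ ψ)
    ∧ (∀ (c : A) (q : List (B × A)), q.length + 1 ≤ cl → (c : C) * tp ρ q ∈ F ρ ψ)
    ∧ (∀ (l : List (A × B)) (aL : A) (c : A) (q : List (B × A)),
        l.length + 1 + q.length ≤ cl →
        (v ρ ψ l aL * ((c : C) * tp ρ q) ∈ F ρ ψ) ∧
        (∀ α : A, v ρ ψ l aL * ((c : C) * (cw ρ α * tp ρ q)) ∈ F ρ ψ)) := by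
  intro cl
  induction cl using Nat.strong_induction_on with | _ cl IH => ?_
  -- Part 1 : Pg
  have hg : ∀ (k : ℕ) (l : List (A × B)) (aL : A) (q : List (B × A)), q.length = k →
      l.length + 1 + q.length ≤ cl → v ρ ψ l aL * tp ρ q ∈ F ρ ψ := by
    intro k
    induction k using Nat.strong_induction_on with | _ k ihk => ?_
    intro l aL q hq hcl
    match q with
    | [] => simpa [tp] using memW1 ρ ψ l aL
    | (β₁, α₁) :: q' =>
      have hsplit : v ρ ψ l aL * tp ρ ((β₁, α₁) :: q')
          = v ρ ψ (l ++ [(aL, β₁)]) α₁ * tp ρ q'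
            + v ρ ψ l aL * (((ψ β₁ : A) : C) * (cw ρ α₁ * tp ρ q')) := by
        rw [v_snoc]; simp only [tp, tw, cw]; push_cast; noncomm_ring
      rw [hsplit]
      refine add_mem ?_ ?_
      · refine ihk q'.length (by simp at hq; omega) _ _ _ rfl ?_
        simp at hq hcl ⊢; omega
      · have hcl' : l.length + 1 + q'.length ≤ cl - 1 := by
          simp only [List.length_cons] at hcl; omega
        exact ((IH (cl - 1) (by simp only [List.length_cons] at hcl; omega)).2.2.2
          l aL (ψ β₁) q' hcl').2 α₁
  -- Part 2 : Pg0
  have hg0 : ∀ q : List (B × A), q.length ≤ cl → tp ρ q ∈ F ρ ψ := by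
    intro q hq
    match q with
    | [] => simpa [tp] using mem1 ρ ψ
    | (β₁, α₁) :: q' =>
      show (β₁ : C) * (cw ρ α₁ * tp ρ q') ∈ F ρ ψ
      refine Bmul ρ ψ β₁ ?_
      have := hg q'.length [] α₁ q' rfl (by simp at hq ⊢; omega)
      simpa [v] using this
  -- Part 3 : Pe0
  have he0 : ∀ (c : A) (q : List (B × A)), q.length + 1 ≤ cl → (c : C) * tp ρ q ∈ F ρ ψ := by
    intro c q hq
    have hsplit : (c : C) * tp ρ q = v ρ ψ [] c * tp ρ q + ((ρ c : B) : C) * tp ρ q := by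
      simp only [v, cw]; noncomm_ring
    rw [hsplit]
    exact add_mem (hg q.length [] c q rfl (by simp; omega)) (Bmul ρ ψ _ (hg0 q (by omega)))
  -- helper : word * (raw b * tail)
  have hlp3 : ∀ (l : List (A × B)) (aL : A) (β : B) (q : List (B × A)),
      l.length + 1 + q.length ≤ cl → v ρ ψ l aL * ((β : C) * tp ρ q) ∈ F ρ ψ := by
    intro l aL β q hcl
    match q with
    | [] => simpa [tp] using memWr ρ ψ l aL β
    | (β₁, α₁) :: q' =>
      have hsplit : v ρ ψ l aL * ((β : C) * tp ρ ((β₁, α₁) :: q'))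
          = v ρ ψ l aL * tp ρ ((β * β₁, α₁) :: q') := by
        simp only [tp]; push_cast; noncomm_ring
      rw [hsplit]
      exact hg _ l aL _ rfl (by simpa using hcl)
  -- helper : word * (tw d * (raw b * tail))
  have hlp1 : ∀ (l' : List (A × B)) (aP : A) (d β : B) (q : List (B × A)),
      l'.length + 2 + q.length ≤ cl →
      v ρ ψ l' aP * (tw ψ d * ((β : C) * tp ρ q)) ∈ F ρ ψ := by
    intro l' aP d β q hcl
    match q with
    | [] =>
      have hsplit : v ρ ψ l' aP * (tw ψ d * ((β : C) * tp ρ []))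
          = v ρ ψ l' aP * ((d * β : B) : C)
            - (v ρ ψ l' aP * (((ψ d : A) : C) * tp ρ [])) * (β : C) := by
        simp only [tp, tw]; push_cast; noncomm_ring
      rw [hsplit]
      refine sub_mem (memWr ρ ψ l' aP _) (BmulR ρ ψ β ?_)
      exact ((IH (cl - 1) (by omega)).2.2.2 l' aP (ψ d) [] (by simp; omega)).1
    | (β₁, α₁) :: q' =>
      have hsplit : v ρ ψ l' aP * (tw ψ d * ((β : C) * tp ρ ((β₁, α₁) :: q')))
          = v ρ ψ (l' ++ [(aP, d * (β * β₁))]) α₁ * tp ρ q'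
            + v ρ ψ l' aP * (((ψ (d * (β * β₁)) : A) : C) * (cw ρ α₁ * tp ρ q'))
            - v ρ ψ l' aP * (((ψ d : A) : C) * tp ρ ((β * β₁, α₁) :: q')) := by
        rw [v_snoc]; simp only [tp, tw, cw]; push_cast; noncomm_ring
      rw [hsplit]
      refine sub_mem (add_mem ?_ ?_) ?_
      · exact hg _ _ _ _ rfl (by simp at hcl ⊢; omega)
      · exact ((IH (cl - 1) (by simp at hcl; omega)).2.2.2 l' aP _ q'
          (by simp at hcl ⊢; omega)).2 α₁
      · exact ((IH (cl - 1) (by simp at hcl; omega)).2.2.2 l' aP (ψ d)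
          ((β * β₁, α₁) :: q') (by simp at hcl ⊢; omega)).1
  -- Part 4 : Pe and Pe' simultaneously, inner strong induction on word length
  have hee : ∀ (n : ℕ) (l : List (A × B)) (aL c : A) (q : List (B × A)), l.length = n →
      l.length + 1 + q.length ≤ cl →
      (v ρ ψ l aL * ((c : C) * tp ρ q) ∈ F ρ ψ) ∧
      (∀ α : A, v ρ ψ l aL * ((c : C) * (cw ρ α * tp ρ q)) ∈ F ρ ψ) := by
    intro n
    induction n using Nat.strong_induction_on with | _ n ihn => ?_
    intro l aL c q hn hcl
    rcases List.eq_nil_or_concat l with rfl | ⟨l', p, rfl⟩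
    · -- base case : single-letter word
      constructor
      · have hsplit : v ρ ψ [] aL * ((c : C) * tp ρ q)
            = v ρ ψ [] (aL * c) * tp ρ q + ((ρ (aL * c) : B) : C) * tp ρ q
              - ((ρ aL : B) : C) * ((c : C) * tp ρ q) := by
          simp only [v, cw]; push_cast; noncomm_ring
        rw [hsplit]
        refine sub_mem (add_mem ?_ ?_) ?_
        · exact hg _ [] _ q rfl (by simpa using hcl)
        · exact Bmul ρ ψ _ (hg0 q (by simp at hcl; omega))
        · exact Bmul ρ ψ _ (he0 c q (by simp at hcl; omega))
      · intro α
        have hsplit : v ρ ψ [] aL * ((c : C) * (cw ρ α * tp ρ q))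
            = v ρ ψ [] (aL * c * α) * tp ρ q
              + ((ρ (aL * c * α) : B) : C) * tp ρ q
              - v ρ ψ [] (aL * c) * (((ρ α : B) : C) * tp ρ q)
              - ((ρ (aL * c) * ρ α : B) : C) * tp ρ q
              - ((ρ aL : B) : C) * (v ρ ψ [] (c * α) * tp ρ q)
              - ((ρ aL * ρ (c * α) : B) : C) * tp ρ q
              + ((ρ aL : B) : C) * (v ρ ψ [] c * (((ρ α : B) : C) * tp ρ q))
              + ((ρ aL * ρ c * ρ α : B) : C) * tp ρ q := by
          simp only [v, cw]; push_cast; noncomm_ring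
        rw [hsplit]
        have h1 := hg _ [] (aL * c * α) q rfl (by simpa using hcl)
        have h2 := Bmul ρ ψ (ρ (aL * c * α)) (hg0 q (by simp at hcl; omega))
        have h3 := hlp3 [] (aL * c) (ρ α) q (by simpa using hcl)
        have h4 := Bmul ρ ψ (ρ (aL * c) * ρ α) (hg0 q (by simp at hcl; omega))
        have h5 := Bmul ρ ψ (ρ aL) (hg _ [] (c * α) q rfl (by simpa using hcl))
        have h6 := Bmul ρ ψ (ρ aL * ρ (c * α)) (hg0 q (by simp at hcl; omega))
        have h7 := Bmul ρ ψ (ρ aL) (hlp3 [] c (ρ α) q (by simpa using hcl))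
        have h8 := Bmul ρ ψ (ρ aL * ρ c * ρ α) (hg0 q (by simp at hcl; omega))
        exact add_mem (add_mem (sub_mem (sub_mem (sub_mem (sub_mem (add_mem h1 h2) h3) h4) h5) h6) h7) h8
    · -- inductive case : word ends with tw d * cw aL
      obtain ⟨aP, d⟩ := p
      have hlen : l'.length + 1 = n := by
        simpa using hn
      have hcl' : l'.length + 2 + q.length ≤ cl := by
        simp only [List.concat_eq_append, List.length_append, List.length_cons] at hcl; omega
      -- helper : word * (tw d * (raw b * (cw γ * tail)))
      have hlp2 : ∀ (e : B) (γ : A) (q₂ : List (B × A)), l'.length + 2 + q₂.length ≤ cl →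
          v ρ ψ l' aP * (tw ψ d * ((e : C) * (cw ρ γ * tp ρ q₂))) ∈ F ρ ψ := by
        intro e γ q₂ h2
        have hsplit : v ρ ψ l' aP * (tw ψ d * ((e : C) * (cw ρ γ * tp ρ q₂)))
            = v ρ ψ (l' ++ [(aP, d * e)]) γ * tp ρ q₂
              + v ρ ψ l' aP * (((ψ (d * e) : A) : C) * (cw ρ γ * tp ρ q₂))
              - v ρ ψ l' aP * (((ψ d : A) : C) * tp ρ ((e, γ) :: q₂)) := by
          rw [v_snoc]; simp only [tp, tw, cw]; push_cast; noncomm_ring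
        rw [hsplit]
        refine sub_mem (add_mem ?_ ?_) ?_
        · exact hg _ _ _ _ rfl (by simp; omega)
        · exact ((IH (cl - 1) (by omega)).2.2.2 l' aP (ψ (d * e)) q₂ (by omega)).2 γ
        · exact (ihn l'.length (by omega) l' aP (ψ d) ((e, γ) :: q₂) rfl (by simp; omega)).1
      constructor
      · -- Pe, snoc case
        have hsplit : v ρ ψ (l'.concat (aP, d)) aL * ((c : C) * tp ρ q)
            = v ρ ψ (l' ++ [(aP, d)]) (aL * c) * tp ρ q
              + v ρ ψ l' aP * (tw ψ d * (((ρ (aL * c) : B) : C) * tp ρ q))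
              - v ρ ψ l' aP * (tw ψ d * (((ρ aL * ρ c : B) : C) * tp ρ q))
              - v ρ ψ l' aP * (tw ψ d * (((ρ aL : B) : C) * (cw ρ c * tp ρ q))) := by
          simp only [List.concat_eq_append]
          rw [v_snoc, v_snoc]; simp only [cw, tw]; push_cast; noncomm_ring
        rw [hsplit]
        refine sub_mem (sub_mem (add_mem ?_ ?_) ?_) ?_
        · exact hg _ _ _ _ rfl (by simp; omega)
        · exact hlp1 l' aP d _ q hcl'
        · exact hlp1 l' aP d _ q hcl'
        · exact hlp2 (ρ aL) c q hcl'
      · -- Pe', snoc case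
        intro α
        have hT7 : v ρ ψ l' aP * (tw ψ d * (((ρ aL : B) : C) * (cw ρ c * (((ρ α : B) : C) * tp ρ q)))) ∈ F ρ ψ := by
          match q with
          | [] =>
            have heq : v ρ ψ l' aP * (tw ψ d * (((ρ aL : B) : C) * (cw ρ c * (((ρ α : B) : C) * tp ρ []))))
                = (v ρ ψ l' aP * (tw ψ d * (((ρ aL : B) : C) * (cw ρ c * tp ρ [])))) * ((ρ α : B) : C) := by
              simp only [tp]; noncomm_ring
            rw [heq]
            exact BmulR ρ ψ _ (hlp2 (ρ aL) c [] (by omega))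
          | (β₁, α₁) :: q' =>
            have heq : v ρ ψ l' aP * (tw ψ d * (((ρ aL : B) : C) * (cw ρ c * (((ρ α : B) : C) * tp ρ ((β₁, α₁) :: q')))))
                = v ρ ψ l' aP * (tw ψ d * (((ρ aL : B) : C) * (cw ρ c * tp ρ ((ρ α * β₁, α₁) :: q')))) := by
              simp only [tp]; push_cast; noncomm_ring
            rw [heq]
            exact hlp2 (ρ aL) c ((ρ α * β₁, α₁) :: q') (by simp at hcl' ⊢; omega)
        have hsplit : v ρ ψ (l'.concat (aP, d)) aL * ((c : C) * (cw ρ α * tp ρ q))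
            = v ρ ψ (l' ++ [(aP, d)]) (aL * c * α) * tp ρ q
              + v ρ ψ l' aP * (tw ψ d * (((ρ (aL * c * α) : B) : C) * tp ρ q))
              - v ρ ψ (l' ++ [(aP, d)]) (aL * c) * (((ρ α : B) : C) * tp ρ q)
              - v ρ ψ l' aP * (tw ψ d * (((ρ (aL * c) * ρ α : B) : C) * tp ρ q))
              - v ρ ψ l' aP * (tw ψ d * (((ρ aL : B) : C) * (cw ρ (c * α) * tp ρ q)))
              - v ρ ψ l' aP * (tw ψ d * (((ρ aL * ρ (c * α) : B) : C) * tp ρ q))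
              + v ρ ψ l' aP * (tw ψ d * (((ρ aL : B) : C) * (cw ρ c * (((ρ α : B) : C) * tp ρ q))))
              + v ρ ψ l' aP * (tw ψ d * (((ρ aL * ρ c * ρ α : B) : C) * tp ρ q)) := by
          simp only [List.concat_eq_append]
          rw [v_snoc, v_snoc, v_snoc]; simp only [cw, tw]; push_cast; noncomm_ring
        rw [hsplit]
        have h1 := hg _ (l' ++ [(aP, d)]) (aL * c * α) q rfl (by simp; omega)
        have h2 := hlp1 l' aP d (ρ (aL * c * α)) q hcl'
        have h3 := hlp3 (l' ++ [(aP, d)]) (aL * c) (ρ α) q (by simp; omega)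
        have h4 := hlp1 l' aP d (ρ (aL * c) * ρ α) q hcl'
        have h5 := hlp2 (ρ aL) (c * α) q hcl'
        have h6 := hlp1 l' aP d (ρ aL * ρ (c * α)) q hcl'
        have h8 := hlp1 l' aP d (ρ aL * ρ c * ρ α) q hcl'
        exact add_mem (add_mem (sub_mem (sub_mem (sub_mem (sub_mem (add_mem h1 h2) h3) h4) h5) h6) hT7) h8
  exact ⟨fun l aL q h => hg q.length l aL q rfl h, hg0, he0,
    fun l aL c q h => hee l.length l aL c q rfl h⟩


lemma Pe'All (l : List (A × B)) (aL : A) (c : A) (α : A) (q : List (B × A)) :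
    v ρ ψ l aL * ((c : C) * (cw ρ α * tp ρ q)) ∈ F ρ ψ :=
  ((grand ρ ψ (l.length + 1 + q.length)).2.2.2 l aL c q le_rfl).2 α

lemma RmulA {x : C} (hx : x ∈ F ρ ψ) (a : A) : x * (a : C) ∈ F ρ ψ := by
  induction hx using Submodule.span_induction with
  | mem y hy =>
    rcases hy with ⟨b', rfl⟩ | ⟨b₀, b₁, l, aL, rfl⟩
    · have hsplit : (b' : C) * (a : C)
          = (b' : C) * v ρ ψ [] a + ((b' * ρ a : B) : C) := by
        simp only [v, cw]; push_cast; noncomm_ring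
      rw [hsplit]
      exact add_mem (memWl ρ ψ b' [] a) (memB ρ ψ _)
    · have hsplit : (b₀ : C) * v ρ ψ l aL * (b₁ : C) * (a : C)
          = (b₀ : C) * v ρ ψ (l ++ [(aL, b₁)]) a
            + (b₀ : C) * (v ρ ψ l aL * (((ψ b₁ : A) : C) * (cw ρ a * tp ρ [])))
            + (b₀ : C) * v ρ ψ l aL * ((b₁ * ρ a : B) : C) := by
        rw [v_snoc]; simp only [tp, tw, cw]; push_cast; noncomm_ring
      rw [hsplit]
      refine add_mem (add_mem (memWl ρ ψ b₀ _ _) ?_) (memW ρ ψ _ _ _ _)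
      exact Bmul ρ ψ b₀ (Pe'All ρ ψ l aL (ψ b₁) a [])
  | zero => simpa using (F ρ ψ).zero_mem
  | add x y hx hy ihx ihy => simpa [add_mul] using (F ρ ψ).add_mem ihx ihy
  | smul r x hx ihx => simpa [smul_mul_assoc] using (F ρ ψ).smul_mem r ihx

lemma RmulB {x : C} (hx : x ∈ F ρ ψ) (b : B) : x * (b : C) ∈ F ρ ψ := by
  induction hx using Submodule.span_induction with
  | mem y hy =>
    rcases hy with ⟨b', rfl⟩ | ⟨b₀, b₁, l, aL, rfl⟩
    · simpa using memB ρ ψ (b' * b)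
    · have : (b₀ : C) * v ρ ψ l aL * (b₁ : C) * (b : C)
          = (b₀ : C) * v ρ ψ l aL * ((b₁ * b : B) : C) := by
        push_cast; noncomm_ring
      rw [this]; exact memW ρ ψ _ _ _ _
  | zero => simpa using (F ρ ψ).zero_mem
  | add x y hx hy ihx ihy => simpa [add_mul] using (F ρ ψ).add_mem ihx ihy
  | smul r x hx ihx => simpa [smul_mul_assoc] using (F ρ ψ).smul_mem r ihx

lemma prod_mem_F : ∀ L : List C, (∀ y ∈ L, y ∈ (A : Set C) ∪ (B : Set C)) →
    L.prod ∈ F ρ ψ := by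
  intro L
  induction L using List.reverseRecOn with
  | nil => intro _; simpa using mem1 ρ ψ
  | append_singleton L z ih =>
    intro hL
    have hz := hL z (by simp)
    have hL' : ∀ y ∈ L, y ∈ (A : Set C) ∪ (B : Set C) := fun y hy => hL y (by simp [hy])
    rw [List.prod_append, List.prod_singleton]
    rcases hz with hz | hz
    · exact RmulA ρ ψ (ih hL') ⟨z, hz⟩
    · exact RmulB ρ ψ (ih hL') ⟨z, hz⟩

lemma mem_F_of_mem_sup {x : C} (hx : x ∈ (A ⊔ B : Subalgebra ℂ C)) : x ∈ F ρ ψ := by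
  have hsup : (A ⊔ B : Subalgebra ℂ C) = Algebra.adjoin ℂ ((A : Set C) ∪ (B : Set C)) := by
    rw [Algebra.adjoin_union, Algebra.adjoin_eq, Algebra.adjoin_eq]
  rw [hsup] at hx
  have hx' : x ∈ Submodule.span ℂ ((Submonoid.closure ((A : Set C) ∪ (B : Set C)) : Submonoid C) : Set C) := by
    rw [← Algebra.adjoin_eq_span]; exact hx
  refine Submodule.span_le.mpr ?_ hx'
  intro y hy
  obtain ⟨L, hL, rfl⟩ := Submonoid.exists_list_of_mem_closure hy
  exact prod_mem_F ρ ψ L hL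

lemma key (n : ℕ) (a : Fin (n + 1) → A) (b : Fin n → B) :
    (List.ofFn fun i : Fin n => cw ρ (a i.castSucc) * tw ψ (b i)).prod * cw ρ (a (Fin.last n))
      = v ρ ψ (List.ofFn fun i : Fin n => (a i.castSucc, b i)) (a (Fin.last n)) := by
  induction n with
  | zero => simp [v]
  | succ n ih =>
    rw [List.ofFn_succ (f := fun i : Fin (n+1) => cw ρ (a i.castSucc) * tw ψ (b i)),
      List.ofFn_succ (f := fun i : Fin (n+1) => (a i.castSucc, b i))]
    simp only [List.prod_cons]
    have := ih (fun i => a i.succ) (fun i => b i.succ)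
    simp only [Fin.succ_castSucc, ← Fin.succ_last] at this ⊢
    rw [mul_assoc, this]
    simp [v, mul_assoc]

lemma e_v (e : C →ₗ[ℂ] C)
    (h2 : ∀ (n : ℕ) (a : Fin (n + 1) → A) (b : Fin n → B),
      e ((List.ofFn (fun i : Fin n =>
          ((a i.castSucc : C) - ((ρ (a i.castSucc) : B) : C)) *
            ((b i : C) - ((ψ (b i) : A) : C)))).prod *
        ((a (Fin.last n) : C) - ((ρ (a (Fin.last n)) : B) : C))) = 0)
    (l : List (A × B)) (aL : A) : e (v ρ ψ l aL) = 0 := by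
  have hkey := key ρ ψ l.length (Fin.snoc (fun i => (l.get i).1) aL) (fun i => (l.get i).2)
  simp only [Fin.snoc_castSucc, Fin.snoc_last] at hkey
  have hl : (List.ofFn fun i => ((l.get i).1, (l.get i).2)) = l := List.ofFn_get l
  rw [hl] at hkey
  have h2' := h2 l.length (Fin.snoc (fun i => (l.get i).1) aL) (fun i => (l.get i).2)
  simp only [Fin.snoc_castSucc, Fin.snoc_last] at h2'
  rw [← hkey]
  exact h2'

end RLib

theorem stmt10 {C : Type*} [Ring C] [Algebra ℂ C] (A B : Subalgebra ℂ C)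
    (e : C →ₗ[ℂ] C) (ρ : A →ₗ[ℂ] B) (ψ : B →ₗ[ℂ] A)
    (h : RightLiberated A B e ρ ψ) :
    ∀ x ∈ (A ⊔ B : Subalgebra ℂ C), ∃ b : B, e x = (b : C) * e 1 := by
  intro x hx
  have hxF := RLib.mem_F_of_mem_sup ρ ψ hx
  let S : Submodule ℂ C :=
    { carrier := {y | ∃ b : B, e y = (b : C) * e 1}
      add_mem' := by
        rintro y z ⟨b, hb⟩ ⟨b', hb'⟩
        exact ⟨b + b', by simp [map_add, hb, hb', add_mul]⟩
      zero_mem' := ⟨0, by simp⟩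
      smul_mem' := by
        rintro r y ⟨b, hb⟩
        exact ⟨r • b, by simp [map_smul, hb, smul_mul_assoc]⟩ }
  have hFS : RLib.F ρ ψ ≤ S := by
    rw [RLib.F]
    refine Submodule.span_le.mpr ?_
    rintro y (⟨b, rfl⟩ | ⟨b₀, b₁, l, aL, rfl⟩)
    · refine ⟨b, ?_⟩
      have := h.1 b 1 1
      simpa using this
    · refine ⟨0, ?_⟩
      have h1 := h.1 b₀ b₁ (RLib.v ρ ψ l aL)
      have h0 : e (RLib.v ρ ψ l aL) = 0 := RLib.e_v ρ ψ e h.2 l aL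
      simp [h1, h0]
  exact hFS hxF
end

section
/- Suppose the pair (A, B) is left-liberated in 𝒞 with respect to (𝔢, ρ, ψ). Then for every element x of the subalgebra ⟨A, B⟩ generated by A and B, there exists a ∈ A with 𝔢(x) = a · 𝔢(1). -/
/-- The pair of subalgebras `(A, B)` of `C` is *left-liberated* with respect to
`(e, ρ, ψ)` if `e` is an `A`-bimodule map and every alternating product of centered
elements `b̃₁ å₁ b̃₂ ⋯ å_{n-1} b̃ₙ` (with `å = a - ρ a` and `b̃ = b - ψ b`) is killed by `e`. -/
def LeftLiberated {C : Type*} [Ring C] [Algebra ℂ C]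
    (A B : Subalgebra ℂ C) (e : C →ₗ[ℂ] C)
    (ρ : A →ₗ[ℂ] B) (ψ : B →ₗ[ℂ] A) : Prop :=
  (∀ (a₁ a₂ : A) (x : C), e ((a₁ : C) * x * (a₂ : C)) = (a₁ : C) * e x * (a₂ : C)) ∧
  (∀ (n : ℕ) (b : Fin (n + 1) → B) (a : Fin n → A),
    e ((List.ofFn (fun i : Fin n =>
        ((b i.castSucc : C) - ((ψ (b i.castSucc) : A) : C)) *
          ((a i : C) - ((ρ (a i) : B) : C)))).prod *
      ((b (Fin.last n) : C) - ((ψ (b (Fin.last n)) : A) : C))) = 0)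

namespace LLaux

variable {C : Type*} [Ring C] [Algebra ℂ C] {A B : Subalgebra ℂ C}

/-- centered element of `B` -/
def til (ψ : B →ₗ[ℂ] A) (b : B) : C := (b : C) - ((ψ b : A) : C)

/-- centered element of `A` -/
def cir (ρ : A →ₗ[ℂ] B) (a : A) : C := (a : C) - ((ρ a : B) : C)

/-- partial centered word `til b₁ * cir a₁ * ⋯ * til bₖ * cir aₖ` -/
def cw (ρ : A →ₗ[ℂ] B) (ψ : B →ₗ[ℂ] A) (P : List (B × A)) : C :=
  (P.map (fun p => til ψ p.1 * cir ρ p.2)).prod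

variable (A B) in
/-- letters: raw elements of A or B -/
def elC : (A ⊕ B) → C := Sum.elim (fun a => (a : C)) (fun b => (b : C))

variable (A B) in
def lprod (xs : List (A ⊕ B)) : C := (xs.map (elC A B)).prod

variable (A B) in
/-- number of maximal B-blocks in a letter pattern -/
def blocks : List (A ⊕ B) → ℕ
  | [] => 0
  | .inl _ :: r => blocks r
  | .inr _ :: .inr b :: r => blocks (.inr b :: r)
  | .inr _ :: .inl a :: r => 1 + blocks (.inl a :: r)
  | [.inr _] => 1

/-- raw alternating word -/
def rawword (a₀ : A) (L : List (B × A)) : C :=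
  (a₀ : C) * (L.map (fun p => (p.1 : C) * (p.2 : C))).prod

variable (ρ : A →ₗ[ℂ] B) (ψ : B →ₗ[ℂ] A)

/-- the candidate submodule: A plus span of A·(centered word)·A -/
def Dsub : Submodule ℂ C :=
  Submodule.span ℂ ((A : Set C) ∪ {x | ∃ (a₀ : A) (P : List (B × A)) (bf : B) (a₁ : A),
    x = (a₀ : C) * (cw ρ ψ P * til ψ bf) * (a₁ : C)})

lemma mem_D_of_A (a : A) : (a : C) ∈ Dsub ρ ψ :=
  Submodule.subset_span (Or.inl a.2)

lemma mem_D_word (a₀ : A) (P : List (B × A)) (bf : B) (a₁ : A) :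
    (a₀ : C) * (cw ρ ψ P * til ψ bf) * (a₁ : C) ∈ Dsub ρ ψ :=
  Submodule.subset_span (Or.inr ⟨a₀, P, bf, a₁, rfl⟩)

lemma D_mulA (a : A) {x : C} (hx : x ∈ Dsub ρ ψ) : (a : C) * x ∈ Dsub ρ ψ := by
  induction hx using Submodule.span_induction with
  | mem y hy =>
    rcases hy with hy | ⟨a₀, P, bf, a₁, rfl⟩
    · exact Submodule.subset_span (Or.inl (mul_mem a.2 hy))
    · have : (a : C) * ((a₀ : C) * (cw ρ ψ P * til ψ bf) * (a₁ : C))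
          = ((a * a₀ : A) : C) * (cw ρ ψ P * til ψ bf) * (a₁ : C) := by
        push_cast; simp [mul_assoc]
      rw [this]; exact mem_D_word ρ ψ _ _ _ _
  | zero => simp
  | add y z _ _ hy hz => rw [mul_add]; exact (Dsub ρ ψ).add_mem hy hz
  | smul c y _ hy => rw [mul_smul_comm]; exact (Dsub ρ ψ).smul_mem c hy

lemma lprod_nil : lprod A B [] = 1 := rfl

lemma lprod_cons (x : A ⊕ B) (xs : List (A ⊕ B)) :
    lprod A B (x :: xs) = elC A B x * lprod A B xs := by
  simp [lprod]

lemma lprod_append (xs ys : List (A ⊕ B)) :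
    lprod A B (xs ++ ys) = lprod A B xs * lprod A B ys := by
  simp [lprod]

lemma blocks_inl (a : A) (xs : List (A ⊕ B)) :
    blocks A B (.inl a :: xs) = blocks A B xs := by
  cases xs with
  | nil => rfl
  | cons y r => cases y <;> rfl

lemma blocks_inr_inr (b b' : B) (r : List (A ⊕ B)) :
    blocks A B (.inr b :: .inr b' :: r) = blocks A B (.inr b' :: r) := rfl

lemma blocks_inr_congr (b b' : B) (r : List (A ⊕ B)) :
    blocks A B (.inr b :: r) = blocks A B (.inr b' :: r) := by
  cases r with
  | nil => rfl
  | cons y r => cases y <;> rfl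

lemma blocks_cons_le (x : A ⊕ B) (xs : List (A ⊕ B)) :
    blocks A B (x :: xs) ≤ 1 + blocks A B xs := by
  cases x with
  | inl a => rw [blocks_inl]; omega
  | inr b =>
    cases xs with
    | nil => simp [blocks]
    | cons y r =>
      cases y with
      | inl a => simp [blocks]
      | inr b' => rw [blocks_inr_inr]; omega

/-- every typed letter list multiplies out to a raw alternating word with at most
`blocks` pairs -/
lemma norm : ∀ (k : ℕ) (xs : List (A ⊕ B)), xs.length ≤ k →
    ∃ (a₀ : A) (L : List (B × A)), L.length ≤ blocks A B xs ∧ lprod A B xs = rawword a₀ L := by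
  intro k
  induction k with
  | zero =>
    intro xs hxs
    rw [List.length_eq_zero_iff.mp (Nat.le_zero.mp hxs)]
    exact ⟨1, [], by simp, by simp [lprod_nil, rawword]⟩
  | succ k IH =>
    intro xs hxs
    match xs with
    | [] => exact ⟨1, [], by simp, by simp [lprod_nil, rawword]⟩
    | .inl a :: r =>
      obtain ⟨a₀, L, hL, hprod⟩ := IH r (by simp at hxs ⊢; omega)
      refine ⟨a * a₀, L, by rwa [blocks_inl], ?_⟩
      rw [lprod_cons, hprod, rawword, rawword]
      push_cast
      simp [elC, mul_assoc]
    | [.inr b] =>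
      refine ⟨1, [(b, 1)], by simp [blocks], ?_⟩
      simp [lprod_cons, lprod_nil, rawword, elC]
    | .inr b :: .inl a :: r =>
      obtain ⟨a₀, L, hL, hprod⟩ := IH r (by simp at hxs ⊢; omega)
      refine ⟨1, (b, a * a₀) :: L, ?_, ?_⟩
      · show L.length + 1 ≤ 1 + blocks A B (.inl a :: r)
        rw [blocks_inl]; omega
      · rw [lprod_cons, lprod_cons, hprod, rawword, rawword]
        push_cast
        simp [elC, mul_assoc]
    | .inr b :: .inr b' :: r =>
      obtain ⟨a₀, L, hL, hprod⟩ := IH (.inr (b * b') :: r) (by simp at hxs ⊢; omega)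
      refine ⟨a₀, L, by rw [blocks_inr_inr, ← blocks_inr_congr (A := A) (b * b') b']; exact hL, ?_⟩
      rw [lprod_cons, lprod_cons, ← hprod, lprod_cons]
      push_cast [elC]
      simp [mul_assoc]

lemma blocks_inr_inl (b : B) (a : A) (r : List (A ⊕ B)) :
    blocks A B (.inr b :: .inl a :: r) = 1 + blocks A B (.inl a :: r) := rfl

lemma cw_append_single (P : List (B × A)) (b : B) (a : A) :
    cw ρ ψ (P ++ [(b, a)]) = cw ρ ψ P * (til ψ b * cir ρ a) := by
  simp [cw]

lemma lprod_bind (L : List (B × A)) :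
    lprod A B (L.flatMap (fun p => [.inr p.1, .inl p.2]))
      = (L.map (fun p => (p.1 : C) * (p.2 : C))).prod := by
  induction L with
  | nil => simp [lprod]
  | cons p L IH => simp_all [lprod, elC, mul_assoc]

lemma blocks_bind_le (L : List (B × A)) :
    blocks A B (L.flatMap fun p => [.inr p.1, .inl p.2]) ≤ L.length := by
  induction L with
  | nil => simp [blocks]
  | cons p L IH =>
    rw [List.flatMap_cons, List.cons_append, List.cons_append, List.nil_append,
      blocks_inr_inl, blocks_inl]
    simp only [List.length_cons]
    omega

lemma pre_lemma (n : ℕ)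
    (HD : ∀ xs : List (A ⊕ B), blocks A B xs < n → lprod A B xs ∈ Dsub ρ ψ) :
    ∀ (P : List (B × A)) (a₀ : A) (xs : List (A ⊕ B)),
      P.length + blocks A B xs < n →
      (a₀ : C) * cw ρ ψ P * lprod A B xs ∈ Dsub ρ ψ := by
  intro P
  induction P using List.reverseRecOn with
  | nil =>
    intro a₀ xs hb
    have : (a₀ : C) * cw ρ ψ [] * lprod A B xs = (a₀ : C) * lprod A B xs := by
      simp [cw]
    rw [this]
    exact D_mulA ρ ψ a₀ (HD xs (by simpa using hb))
  | append_singleton P' p IH =>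
    intro a₀ xs hb
    obtain ⟨b, a⟩ := p
    have hb' : P'.length + blocks A B xs + 1 < n := by
      simpa [Nat.add_comm, Nat.add_assoc, Nat.add_left_comm] using hb
    have key : (a₀ : C) * cw ρ ψ (P' ++ [(b, a)]) * lprod A B xs
        = (a₀ : C) * cw ρ ψ P' * lprod A B (.inr b :: .inl a :: xs)
          - (a₀ : C) * cw ρ ψ P' * lprod A B (.inr b :: .inr (ρ a) :: xs)
          - (a₀ : C) * cw ρ ψ P' * lprod A B (.inl (ψ b) :: .inl a :: xs)
          + (a₀ : C) * cw ρ ψ P' * lprod A B (.inl (ψ b) :: .inr (ρ a) :: xs) := by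
      rw [cw_append_single]
      simp only [lprod_cons, elC, Sum.elim_inl, Sum.elim_inr, til, cir]
      noncomm_ring
    rw [key]
    have h1 : (a₀ : C) * cw ρ ψ P' * lprod A B (.inr b :: .inl a :: xs) ∈ Dsub ρ ψ := by
      apply IH
      rw [blocks_inr_inl, blocks_inl]
      omega
    have h2 : (a₀ : C) * cw ρ ψ P' * lprod A B (.inr b :: .inr (ρ a) :: xs) ∈ Dsub ρ ψ := by
      apply IH
      have := blocks_cons_le (A := A) (B := B) (.inr (ρ a)) xs
      rw [blocks_inr_inr]
      omega
    have h3 : (a₀ : C) * cw ρ ψ P' * lprod A B (.inl (ψ b) :: .inl a :: xs) ∈ Dsub ρ ψ := by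
      apply IH
      rw [blocks_inl, blocks_inl]
      omega
    have h4 : (a₀ : C) * cw ρ ψ P' * lprod A B (.inl (ψ b) :: .inr (ρ a) :: xs) ∈ Dsub ρ ψ := by
      apply IH
      have := blocks_cons_le (A := A) (B := B) (.inr (ρ a)) xs
      rw [blocks_inl]
      omega
    exact ((Dsub ρ ψ).add_mem (((Dsub ρ ψ).sub_mem ((Dsub ρ ψ).sub_mem h1 h2) h3)) h4)

lemma inner_lemma (n : ℕ)
    (HD : ∀ xs : List (A ⊕ B), blocks A B xs < n → lprod A B xs ∈ Dsub ρ ψ) :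
    ∀ (L : List (B × A)), L ≠ [] → ∀ (P : List (B × A)) (a₀ : A),
      P.length + L.length = n →
      (a₀ : C) * cw ρ ψ P * (L.map (fun p => (p.1 : C) * (p.2 : C))).prod ∈ Dsub ρ ψ := by
  intro L
  induction L with
  | nil => intro h; exact absurd rfl h
  | cons p L'' IHL =>
    intro _ P a₀ hlen
    obtain ⟨b, a⟩ := p
    simp only [List.length_cons] at hlen
    by_cases hL'' : L'' = []
    · subst hL''
      have key : (a₀ : C) * cw ρ ψ P * ([( (b : C) * (a : C) )]).prod
          = (a₀ : C) * (cw ρ ψ P * til ψ b) * (a : C)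
            + (a₀ : C) * cw ρ ψ P * lprod A B [.inl (ψ b * a)] := by
        simp only [lprod_cons, lprod_nil, elC, Sum.elim_inl, til, List.prod_cons,
          List.prod_nil, Subalgebra.coe_mul]
        noncomm_ring
      simp only [List.map_cons, List.map_nil]
      rw [key]
      refine (Dsub ρ ψ).add_mem (mem_D_word ρ ψ _ _ _ _) ?_
      apply pre_lemma ρ ψ n HD
      rw [blocks_inl]
      simp only [blocks]
      omega
    · cases L'' with
      | nil => exact absurd rfl hL''
      | cons q rest =>
        have hzsprod : lprod A B ((q :: rest).flatMap (fun p => [.inr p.1, .inl p.2]))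
            = ((q :: rest).map (fun p => (p.1 : C) * (p.2 : C))).prod := lprod_bind (q :: rest)
        have hzsb : blocks A B ((q :: rest).flatMap (fun p => [.inr p.1, .inl p.2]))
            ≤ (q :: rest).length := blocks_bind_le (q :: rest)
        have hzscons : (q :: rest).flatMap (fun p => [.inr p.1, .inl p.2])
            = (Sum.inr q.1 : A ⊕ B) :: (Sum.inl q.2 :: (rest.flatMap (fun p => [.inr p.1, .inl p.2]))) := by
          simp
        have hmerge : ∀ c : B, blocks A B (.inr c :: (q :: rest).flatMap (fun p => [.inr p.1, .inl p.2]))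
            = blocks A B ((q :: rest).flatMap (fun p => [.inr p.1, .inl p.2])) := by
          intro c
          rw [hzscons, blocks_inr_inr]
        have key : (a₀ : C) * cw ρ ψ P *
              (((b : C) * (a : C)) * ((q :: rest).map (fun p => (p.1 : C) * (p.2 : C))).prod)
            = (a₀ : C) * cw ρ ψ (P ++ [(b, a)]) * ((q :: rest).map (fun p => (p.1 : C) * (p.2 : C))).prod
              + (a₀ : C) * cw ρ ψ P * lprod A B (.inr (b * ρ a) :: (q :: rest).flatMap (fun p => [.inr p.1, .inl p.2]))
              - (a₀ : C) * cw ρ ψ P * lprod A B (.inl (ψ b) :: .inr (ρ a) :: (q :: rest).flatMap (fun p => [.inr p.1, .inl p.2]))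
              + (a₀ : C) * cw ρ ψ P * lprod A B (.inl (ψ b * a) :: (q :: rest).flatMap (fun p => [.inr p.1, .inl p.2])) := by
          rw [cw_append_single]
          simp only [lprod_cons, elC, Sum.elim_inl, Sum.elim_inr, til, cir, hzsprod,
            Subalgebra.coe_mul]
          noncomm_ring
        simp only [List.map_cons, List.prod_cons] at key ⊢
        rw [key]
        have h1 : (a₀ : C) * cw ρ ψ (P ++ [(b, a)]) *
            ((q :: rest).map (fun p => (p.1 : C) * (p.2 : C))).prod ∈ Dsub ρ ψ := by
          apply IHL hL''
          simp only [List.length_append, List.length_cons, List.length_nil] at hlen ⊢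
          omega
        simp only [List.map_cons, List.prod_cons] at h1
        have h2 : (a₀ : C) * cw ρ ψ P *
            lprod A B (.inr (b * ρ a) :: (q :: rest).flatMap (fun p => [.inr p.1, .inl p.2])) ∈ Dsub ρ ψ := by
          apply pre_lemma ρ ψ n HD
          rw [hmerge]
          simp only [List.length_cons] at hzsb hlen ⊢
          omega
        have h3 : (a₀ : C) * cw ρ ψ P *
            lprod A B (.inl (ψ b) :: .inr (ρ a) :: (q :: rest).flatMap (fun p => [.inr p.1, .inl p.2])) ∈ Dsub ρ ψ := by
          apply pre_lemma ρ ψ n HD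
          rw [blocks_inl, hmerge]
          simp only [List.length_cons] at hzsb hlen ⊢
          omega
        have h4 : (a₀ : C) * cw ρ ψ P *
            lprod A B (.inl (ψ b * a) :: (q :: rest).flatMap (fun p => [.inr p.1, .inl p.2])) ∈ Dsub ρ ψ := by
          apply pre_lemma ρ ψ n HD
          rw [blocks_inl]
          simp only [List.length_cons] at hzsb hlen ⊢
          omega
        exact (Dsub ρ ψ).add_mem ((Dsub ρ ψ).sub_mem ((Dsub ρ ψ).add_mem h1 h2) h3) h4

lemma main_claim : ∀ (n : ℕ) (a₀ : A) (L : List (B × A)), L.length = n →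
    rawword a₀ L ∈ Dsub ρ ψ := by
  intro n
  induction n using Nat.strong_induction_on with
  | _ n IH =>
  have HD : ∀ xs : List (A ⊕ B), blocks A B xs < n → lprod A B xs ∈ Dsub ρ ψ := by
    intro xs hxs
    obtain ⟨a₀, L, hL, hp⟩ := norm xs.length xs le_rfl
    rw [hp]
    exact IH L.length (lt_of_le_of_lt hL hxs) a₀ L rfl
  intro a₀ L hlen
  cases L with
  | nil =>
    have : rawword (A := A) (B := B) a₀ [] = ((a₀ : C)) := by simp [rawword]
    rw [this]; exact mem_D_of_A ρ ψ a₀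
  | cons p L'' =>
    have := inner_lemma ρ ψ n HD (p :: L'') (by simp) [] a₀ (by simpa using hlen)
    simpa [cw, rawword] using this

lemma lprod_mem_D (xs : List (A ⊕ B)) : lprod A B xs ∈ Dsub ρ ψ := by
  obtain ⟨a₀, L, _, hp⟩ := norm xs.length xs le_rfl
  rw [hp]
  exact main_claim ρ ψ L.length a₀ L rfl

lemma sup_le_D (x : C) (hx : x ∈ (A ⊔ B : Subalgebra ℂ C)) : x ∈ Dsub ρ ψ := by
  have h1 : (A ⊔ B : Subalgebra ℂ C) = Algebra.adjoin ℂ ((A : Set C) ∪ (B : Set C)) := by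
    rw [Algebra.adjoin_union, Algebra.adjoin_eq, Algebra.adjoin_eq]
  rw [h1] at hx
  have h2 : x ∈ Submodule.span ℂ ((Submonoid.closure ((A : Set C) ∪ (B : Set C)) : Submonoid C) : Set C) := by
    rw [← Algebra.adjoin_eq_span]
    exact hx
  refine Submodule.span_le.mpr ?_ h2
  intro z hz
  simp only [SetLike.mem_coe] at hz
  obtain ⟨xs, rfl⟩ : ∃ xs : List (A ⊕ B), lprod A B xs = z := by
    induction hz using Submonoid.closure_induction with
    | mem w hw =>
      rcases hw with hw | hw
      · exact ⟨[Sum.inl ⟨w, hw⟩], by simp [lprod, elC]⟩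
      · exact ⟨[Sum.inr ⟨w, hw⟩], by simp [lprod, elC]⟩
    | one => exact ⟨[], rfl⟩
    | mul u v hu hv ihu ihv =>
      obtain ⟨xs, rfl⟩ := ihu
      obtain ⟨ys, rfl⟩ := ihv
      exact ⟨xs ++ ys, lprod_append xs ys⟩
  exact lprod_mem_D ρ ψ xs

lemma e_word_zero (e : C →ₗ[ℂ] C) (h : LeftLiberated A B e ρ ψ)
    (P : List (B × A)) (bf : B) : e (cw ρ ψ P * til ψ bf) = 0 := by
  have h2 := h.2 P.length (Fin.snoc (fun i => (P.get i).1) bf) (fun i => (P.get i).2)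
  simp only [Fin.snoc_castSucc, Fin.snoc_last] at h2
  have hmap : P.map (fun p => til ψ p.1 * cir ρ p.2)
      = List.ofFn (fun i => til ψ (P.get i).1 * cir ρ (P.get i).2) := by
    conv_lhs => rw [← List.ofFn_get P]
    rw [List.map_ofFn]
    rfl
  rw [cw, hmap]
  exact h2

end LLaux

theorem stmt11 {C : Type*} [Ring C] [Algebra ℂ C] (A B : Subalgebra ℂ C)
    (e : C →ₗ[ℂ] C) (ρ : A →ₗ[ℂ] B) (ψ : B →ₗ[ℂ] A)
    (h : LeftLiberated A B e ρ ψ) :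
    ∀ x ∈ (A ⊔ B : Subalgebra ℂ C), ∃ a : A, e x = (a : C) * e 1 := by
  intro x hx
  have hD := LLaux.sup_le_D ρ ψ x hx
  clear hx
  induction hD using Submodule.span_induction with
  | mem y hy =>
    rcases hy with hy | ⟨a₀, P, bf, a₁, rfl⟩
    · refine ⟨⟨y, hy⟩, ?_⟩
      have := h.1 ⟨y, hy⟩ 1 1
      simpa using this
    · refine ⟨0, ?_⟩
      rw [h.1 a₀ a₁ (LLaux.cw ρ ψ P * LLaux.til ψ bf),
        LLaux.e_word_zero ρ ψ e h P bf]
      simp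
  | zero => exact ⟨0, by simp⟩
  | add y z hy hz ihy ihz =>
    obtain ⟨a, ha⟩ := ihy
    obtain ⟨a', ha'⟩ := ihz
    refine ⟨a + a', ?_⟩
    push_cast
    rw [map_add, ha, ha', add_mul]
  | smul c y hy ihy =>
    obtain ⟨a, ha⟩ := ihy
    refine ⟨c • a, ?_⟩
    rw [map_smul, ha]
    push_cast
    rw [smul_mul_assoc]
end

section
/- Let (𝒜, f, g, 𝔢) be a right-liberating representation of (A, B, ρ, ψ). Let ⟨A, B⟩ denote the subalgebra of 𝒜 generated by f(A) and g(B). Then 𝔢(⟨A, B⟩) = 𝔢(g(B)) as subsets of 𝒜. -/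
/-!
Write `c a = f a - g (ρ a)` and `d b = g b - f (ψ b)`. The algebra generated by `f(A)` and `g(B)`
is the union of the powers `𝓜 ^ n` of the span `𝓜` of `g(B) ∪ g(B) c(A) g(B)`, i.e. of the spans
of words with at most `n` letters from `c(A)`, separated by elements of `g(B)`. The elements `x`
with `e x ∈ e(g(B))` form a `g(B)`-bimodule containing every alternating word `c d c ⋯ d c`.
A word `c g c g ⋯ g c` with `n + 1` letters `c` differs from `c d c d ⋯ d c` by an element of
`𝓜 ^ n`, because `g b = d b + f (ψ b)` and `c(A) f(A) c(A) ⊆ 𝓜`; induction on `n` concludes.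
-/

/-- A *right-liberating representation* of `(A, B, ρ, ψ)`: algebra homomorphisms
`f : A → 𝒜`, `g : B → 𝒜` and a linear map `e : 𝒜 → 𝒜` which is a `g(B)`-bimodule map
and kills every alternating product `(f a₁ - g (ρ a₁))(g b₁ - f (ψ b₁)) ⋯ (f aₙ - g (ρ aₙ))`. -/
def RightLiberatingRep {A B 𝒜 : Type*} [Ring A] [Algebra ℂ A] [Ring B] [Algebra ℂ B]
    [Ring 𝒜] [Algebra ℂ 𝒜]
    (f : A →ₐ[ℂ] 𝒜) (g : B →ₐ[ℂ] 𝒜) (e : 𝒜 →ₗ[ℂ] 𝒜)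
    (ρ : A →ₗ[ℂ] B) (ψ : B →ₗ[ℂ] A) : Prop :=
  (∀ (b₁ b₂ : B) (x : 𝒜), e (g b₁ * x * g b₂) = g b₁ * e x * g b₂) ∧
  (∀ (n : ℕ) (a : Fin (n + 1) → A) (b : Fin n → B),
    e ((List.ofFn (fun i : Fin n =>
        (f (a i.castSucc) - g (ρ (a i.castSucc))) * (g (b i) - f (ψ (b i))))).prod *
      (f (a (Fin.last n)) - g (ρ (a (Fin.last n))))) = 0)

theorem Submodule.exists_mem_pow_of_mem_adjoin {R 𝒜 : Type*} [CommSemiring R] [Semiring 𝒜]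
    [Algebra R 𝒜] {M : Submodule R 𝒜} (h1 : 1 ≤ M) {s : Set 𝒜} (hs : s ⊆ M) {x : 𝒜}
    (hx : x ∈ Algebra.adjoin R s) : ∃ n, x ∈ M ^ n := by
  induction hx using Algebra.adjoin_induction with
  | mem x hx => exact ⟨1, by rw [pow_one]; exact hs hx⟩
  | algebraMap r => exact ⟨0, by rw [pow_zero]; exact Submodule.algebraMap_mem r⟩
  | add x y _ _ hx hy =>
    obtain ⟨n, hn⟩ := hx
    obtain ⟨m, hm⟩ := hy
    exact ⟨n + m, add_mem (pow_le_pow_right' h1 (Nat.le_add_right n m) hn)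
      (pow_le_pow_right' h1 (Nat.le_add_left m n) hm)⟩
  | mul x y _ _ hx hy =>
    obtain ⟨n, hn⟩ := hx
    obtain ⟨m, hm⟩ := hy
    exact ⟨n + m, pow_add M n m ▸ Submodule.mul_mem_mul hn hm⟩

namespace AlgHom

variable {R S 𝒜 : Type*} [CommSemiring R] [Semiring S] [Algebra R S] [Semiring 𝒜] [Algebra R 𝒜]
  (φ : S →ₐ[R] 𝒜)

lemma mem_toSubmodule_range {y : 𝒜} : y ∈ Subalgebra.toSubmodule φ.range ↔ ∃ x, φ x = y := by
  rw [Subalgebra.mem_toSubmodule, AlgHom.mem_range]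

lemma apply_mem_toSubmodule_range (x : S) : φ x ∈ Subalgebra.toSubmodule φ.range := ⟨x, rfl⟩

lemma toSubmodule_range_mul_self :
    Subalgebra.toSubmodule φ.range * Subalgebra.toSubmodule φ.range =
      Subalgebra.toSubmodule φ.range :=
  (Subalgebra.isIdempotentElem_toSubmodule _).eq

lemma toSubmodule_range_mul_mul_self (X : Submodule R 𝒜) :
    Subalgebra.toSubmodule φ.range * (Subalgebra.toSubmodule φ.range * X) =
      Subalgebra.toSubmodule φ.range * X := by
  rw [← mul_assoc, toSubmodule_range_mul_self]

lemma one_le_toSubmodule_range : 1 ≤ Subalgebra.toSubmodule φ.range :=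
  Submodule.one_le.mpr (one_mem φ.range)

end AlgHom

namespace RightLiberatingRep

section General

variable {R A B 𝒜 : Type*} [CommRing R] [Ring A] [Algebra R A] [Ring B] [Algebra R B]
  [Ring 𝒜] [Algebra R 𝒜] (f : A →ₐ[R] 𝒜) (g : B →ₐ[R] 𝒜) (ρ : A →ₗ[R] B) (ψ : B →ₗ[R] A)

def centeredA : Submodule R 𝒜 := LinearMap.range (f.toLinearMap - g.toLinearMap ∘ₗ ρ)

def centeredB : Submodule R 𝒜 := LinearMap.range (g.toLinearMap - f.toLinearMap ∘ₗ ψ)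

local notation "𝒢" => Subalgebra.toSubmodule g.range
local notation "ℱ" => Subalgebra.toSubmodule f.range
local notation "𝒞" => centeredA f g ρ
local notation "𝒟" => centeredB f g ψ

def atMostOneCentered : Submodule R 𝒜 := 𝒢 * (1 ⊔ 𝒞) * 𝒢

local notation "𝓜" => atMostOneCentered f g ρ

def centeredWords (X : Submodule R 𝒜) (n : ℕ) : Submodule R 𝒜 := 𝒞 * (X * 𝒞) ^ n

def alternatingProduct {n : ℕ} (a : Fin (n + 1) → A) (b : Fin n → B) : 𝒜 :=
  (List.ofFn fun i : Fin n =>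
      (f (a i.castSucc) - g (ρ (a i.castSucc))) * (g (b i) - f (ψ (b i)))).prod *
    (f (a (Fin.last n)) - g (ρ (a (Fin.last n))))

variable {f g ρ ψ} {e : 𝒜 →ₗ[R] 𝒜}

lemma mem_centeredA {x : 𝒜} : x ∈ 𝒞 ↔ ∃ a, f a - g (ρ a) = x := Iff.rfl

lemma mem_centeredB {x : 𝒜} : x ∈ 𝒟 ↔ ∃ b, g b - f (ψ b) = x := Iff.rfl

lemma sub_mem_centeredA (a : A) : f a - g (ρ a) ∈ 𝒞 := ⟨a, rfl⟩

lemma sub_mem_centeredB (b : B) : g b - f (ψ b) ∈ 𝒟 := ⟨b, rfl⟩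

namespace atMostOneCentered

lemma range_g_le : 𝒢 ≤ 𝓜 :=
  calc 𝒢 = 𝒢 * 1 * 𝒢 := by rw [mul_one, g.toSubmodule_range_mul_self]
    _ ≤ 𝓜 := by unfold atMostOneCentered; gcongr; exact le_sup_left

lemma one_le : 1 ≤ 𝓜 := g.one_le_toSubmodule_range.trans range_g_le

lemma centeredA_le : 𝒞 ≤ 𝓜 :=
  calc 𝒞 = 1 * 𝒞 * 1 := by rw [one_mul, mul_one]
    _ ≤ 𝓜 := by
      unfold atMostOneCentered; gcongr
      · exact g.one_le_toSubmodule_range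
      · exact le_sup_right
      · exact g.one_le_toSubmodule_range

lemma mul_range_g_le : 𝓜 * 𝒢 ≤ 𝓜 := by
  rw [atMostOneCentered, mul_assoc _ 𝒢, g.toSubmodule_range_mul_self]

lemma range_g_mul_le : 𝒢 * 𝓜 ≤ 𝓜 := by
  rw [atMostOneCentered, ← mul_assoc, ← mul_assoc, g.toSubmodule_range_mul_self]

lemma mul_range_g_mul_mul_range_g (X : Submodule R 𝒜) :
    𝓜 * (𝒢 * X * 𝒢) = 𝒢 * (X ⊔ 𝒞 * 𝒢 * X) * 𝒢 := by
  simp only [atMostOneCentered, mul_assoc, g.toSubmodule_range_mul_mul_self, Submodule.sup_mul,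
    Submodule.mul_sup, one_mul]

lemma centeredA_mul_range_g_le : 𝒞 * 𝒢 ≤ 𝓜 :=
  calc 𝒞 * 𝒢 ≤ 𝓜 * 𝒢 := by gcongr; exact centeredA_le
    _ ≤ 𝓜 := mul_range_g_le

lemma range_g_mul_centeredA_le : 𝒢 * 𝒞 ≤ 𝓜 :=
  calc 𝒢 * 𝒞 ≤ 𝒢 * 𝓜 := by gcongr; exact centeredA_le
    _ ≤ 𝓜 := range_g_mul_le

lemma range_f_le : ℱ ≤ 𝓜 := by
  intro y hy
  obtain ⟨a, rfl⟩ := f.mem_toSubmodule_range.mp hy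
  rw [← sub_add_cancel (f a) (g (ρ a))]
  exact add_mem (centeredA_le (sub_mem_centeredA a)) (range_g_le (g.apply_mem_toSubmodule_range _))

lemma centeredA_mul_range_f_le : 𝒞 * ℱ ≤ 𝓜 := by
  refine Submodule.mul_le.mpr fun _ hc _ hx ↦ ?_
  obtain ⟨a, rfl⟩ := mem_centeredA.mp hc
  obtain ⟨x, rfl⟩ := f.mem_toSubmodule_range.mp hx
  have key : (f a - g (ρ a)) * f x =
      (f (a * x) - g (ρ (a * x))) - g (ρ a) * (f x - g (ρ x)) + g (ρ (a * x) - ρ a * ρ x) := by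
    simp only [map_mul, map_sub]; noncomm_ring
  rw [key]
  refine add_mem (sub_mem (centeredA_le (sub_mem_centeredA _)) ?_)
    (range_g_le (g.apply_mem_toSubmodule_range _))
  exact range_g_mul_centeredA_le
    (Submodule.mul_mem_mul (g.apply_mem_toSubmodule_range _) (sub_mem_centeredA _))

lemma range_f_mul_centeredA_le : ℱ * 𝒞 ≤ ℱ ⊔ ℱ * 𝒢 := by
  refine Submodule.mul_le.mpr fun _ hx _ hc ↦ ?_
  obtain ⟨a, rfl⟩ := mem_centeredA.mp hc
  obtain ⟨x, rfl⟩ := f.mem_toSubmodule_range.mp hx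
  rw [mul_sub, ← map_mul f]
  exact sub_mem (Submodule.mem_sup_left (f.apply_mem_toSubmodule_range _))
    (Submodule.mem_sup_right (Submodule.mul_mem_mul (f.apply_mem_toSubmodule_range _)
      (g.apply_mem_toSubmodule_range _)))

lemma centeredA_mul_range_f_mul_centeredA_le : 𝒞 * ℱ * 𝒞 ≤ 𝓜 :=
  calc 𝒞 * ℱ * 𝒞 ≤ 𝒞 * (ℱ ⊔ ℱ * 𝒢) := by
        rw [mul_assoc]; gcongr; exact range_f_mul_centeredA_le
    _ = 𝒞 * ℱ ⊔ 𝒞 * ℱ * 𝒢 := by rw [Submodule.mul_sup, mul_assoc]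
    _ ≤ 𝓜 := sup_le centeredA_mul_range_f_le
        ((mul_le_mul_left centeredA_mul_range_f_le _).trans mul_range_g_le)

lemma range_union_range_subset : Set.range f ∪ Set.range g ⊆ 𝓜 := by
  rintro _ (⟨a, rfl⟩ | ⟨b, rfl⟩)
  · exact range_f_le (f.apply_mem_toSubmodule_range a)
  · exact range_g_le (g.apply_mem_toSubmodule_range b)

end atMostOneCentered

lemma centeredB_le : 𝒟 ≤ 𝒢 ⊔ ℱ := by
  intro y hy
  obtain ⟨b, rfl⟩ := mem_centeredB.mp hy
  exact sub_mem (Submodule.mem_sup_left (g.apply_mem_toSubmodule_range b))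
    (Submodule.mem_sup_right (f.apply_mem_toSubmodule_range _))

lemma range_g_le_centeredB_sup : 𝒢 ≤ 𝒟 ⊔ ℱ := by
  intro y hy
  obtain ⟨b, rfl⟩ := g.mem_toSubmodule_range.mp hy
  rw [← sub_add_cancel (g b) (f (ψ b))]
  exact add_mem (Submodule.mem_sup_left (sub_mem_centeredB b))
    (Submodule.mem_sup_right (f.apply_mem_toSubmodule_range _))

lemma centeredA_mul_centeredB_le : 𝒞 * 𝒟 ≤ 𝓜 :=
  calc 𝒞 * 𝒟 ≤ 𝒞 * (𝒢 ⊔ ℱ) := by gcongr; exact centeredB_le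
    _ = 𝒞 * 𝒢 ⊔ 𝒞 * ℱ := Submodule.mul_sup _ _ _
    _ ≤ 𝓜 := sup_le atMostOneCentered.centeredA_mul_range_g_le
        atMostOneCentered.centeredA_mul_range_f_le

namespace centeredWords

variable (X : Submodule R 𝒜)

lemma zero : centeredWords f g ρ X 0 = 𝒞 := by rw [centeredWords, pow_zero, mul_one]

lemma succ (n : ℕ) : centeredWords f g ρ X (n + 1) = 𝒞 * X * centeredWords f g ρ X n := by
  simp only [centeredWords, pow_succ', mul_assoc]

lemma range_g_le_pow (n : ℕ) : centeredWords f g ρ 𝒢 n ≤ 𝓜 ^ (n + 1) := by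
  rw [centeredWords, pow_succ']
  gcongr
  · exact atMostOneCentered.centeredA_le
  · exact atMostOneCentered.range_g_mul_centeredA_le

lemma range_g_le (n : ℕ) : centeredWords f g ρ 𝒢 n ≤ centeredWords f g ρ 𝒟 n ⊔ 𝓜 ^ n := by
  induction n with
  | zero => simp only [zero, le_sup_left]
  | succ n ih =>
    have hD : 𝒞 * 𝒟 * centeredWords f g ρ 𝒢 n ≤ centeredWords f g ρ 𝒟 (n + 1) ⊔ 𝓜 ^ (n + 1) :=
      calc 𝒞 * 𝒟 * centeredWords f g ρ 𝒢 n
          ≤ 𝒞 * 𝒟 * (centeredWords f g ρ 𝒟 n ⊔ 𝓜 ^ n) := by gcongr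
        _ = centeredWords f g ρ 𝒟 (n + 1) ⊔ 𝒞 * 𝒟 * 𝓜 ^ n := by rw [Submodule.mul_sup, succ]
        _ ≤ centeredWords f g ρ 𝒟 (n + 1) ⊔ 𝓜 ^ (n + 1) := by
          rw [pow_succ' 𝓜]; gcongr; exact centeredA_mul_centeredB_le
    have hF : 𝒞 * ℱ * centeredWords f g ρ 𝒢 n ≤ 𝓜 ^ (n + 1) := by
      rw [centeredWords, ← mul_assoc, pow_succ']
      gcongr
      · exact atMostOneCentered.centeredA_mul_range_f_mul_centeredA_le
      · exact atMostOneCentered.range_g_mul_centeredA_le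
    calc centeredWords f g ρ 𝒢 (n + 1) ≤ 𝒞 * (𝒟 ⊔ ℱ) * centeredWords f g ρ 𝒢 n := by
          rw [succ]; gcongr; exact range_g_le_centeredB_sup
      _ ≤ centeredWords f g ρ 𝒟 (n + 1) ⊔ 𝓜 ^ (n + 1) := by
          rw [Submodule.mul_sup, Submodule.sup_mul]
          exact sup_le hD (hF.trans le_sup_right)

end centeredWords

namespace atMostOneCentered

lemma pow_succ_le (n : ℕ) :
    𝓜 ^ (n + 1) ≤ 𝒢 * (𝓜 ^ n ⊔ centeredWords f g ρ 𝒢 n) * 𝒢 := by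
  induction n with
  | zero => rw [zero_add, pow_one, pow_zero, centeredWords.zero]; rfl
  | succ n ih =>
    have step : 𝓜 ^ n ⊔ centeredWords f g ρ 𝒢 n ⊔ 𝒞 * 𝒢 * (𝓜 ^ n ⊔ centeredWords f g ρ 𝒢 n) ≤
        𝓜 ^ (n + 1) ⊔ centeredWords f g ρ 𝒢 (n + 1) := by
      rw [Submodule.mul_sup, ← centeredWords.succ]
      refine sup_le (sup_le ?_ ?_) (sup_le ?_ le_sup_right)
      · exact (pow_le_pow_right' one_le n.le_succ).trans le_sup_left
      · exact (centeredWords.range_g_le_pow n).trans le_sup_left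
      · rw [pow_succ']; exact le_sup_of_le_left (by gcongr; exact centeredA_mul_range_g_le)
    calc 𝓜 ^ (n + 1 + 1) = 𝓜 * 𝓜 ^ (n + 1) := pow_succ' _ _
      _ ≤ 𝓜 * (𝒢 * (𝓜 ^ n ⊔ centeredWords f g ρ 𝒢 n) * 𝒢) := by gcongr
      _ ≤ 𝒢 * (𝓜 ^ (n + 1) ⊔ centeredWords f g ρ 𝒢 (n + 1)) * 𝒢 := by
        rw [mul_range_g_mul_mul_range_g]; gcongr

lemma pow_le {S : Submodule R 𝒜} (h1 : 1 ≤ S) (hS : 𝒢 * S * 𝒢 ≤ S)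
    (hW : ∀ n, centeredWords f g ρ 𝒟 n ≤ S) (n : ℕ) : 𝓜 ^ n ≤ S := by
  induction n with
  | zero => rwa [pow_zero]
  | succ n ih =>
    calc 𝓜 ^ (n + 1) ≤ 𝒢 * (𝓜 ^ n ⊔ centeredWords f g ρ 𝒢 n) * 𝒢 := pow_succ_le n
      _ ≤ 𝒢 * S * 𝒢 := by
        gcongr
        refine sup_le ih ((centeredWords.range_g_le n).trans (sup_le (hW n) ih))
      _ ≤ S := hS

end atMostOneCentered

lemma alternatingProduct_cons {n : ℕ} (a₀ : A) (a : Fin (n + 1) → A) (b₀ : B) (b : Fin n → B) :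
    alternatingProduct f g ρ ψ (Fin.cons a₀ a) (Fin.cons b₀ b) =
      (f a₀ - g (ρ a₀)) * (g b₀ - f (ψ b₀)) * alternatingProduct f g ρ ψ a b := by
  simp [alternatingProduct, List.ofFn_succ, mul_assoc]

lemma centeredWords_le_span (n : ℕ) :
    centeredWords f g ρ 𝒟 n ≤
      Submodule.span R {x | ∃ (a : Fin (n + 1) → A) (b : Fin n → B),
        alternatingProduct f g ρ ψ a b = x} := by
  induction n with
  | zero =>
    rw [centeredWords.zero]
    rintro _ ⟨a, rfl⟩
    exact Submodule.subset_span ⟨fun _ ↦ a, Fin.elim0, by simp [alternatingProduct]⟩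
  | succ n ih =>
    rw [centeredWords.succ]
    calc 𝒞 * 𝒟 * centeredWords f g ρ 𝒟 n
        ≤ Submodule.span R (𝒞 : Set 𝒜) * Submodule.span R (𝒟 : Set 𝒜) *
            Submodule.span R {x | ∃ (a : Fin (n + 1) → A) (b : Fin n → B),
              alternatingProduct f g ρ ψ a b = x} := by
          rw [Submodule.span_eq, Submodule.span_eq]; gcongr
      _ ≤ _ := by
          rw [Submodule.span_mul_span, Submodule.span_mul_span]
          refine Submodule.span_mono ?_
          rintro _ ⟨_, ⟨_, ⟨a₀, rfl⟩, _, ⟨b₀, rfl⟩, rfl⟩, _, ⟨a, b, rfl⟩, rfl⟩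
          exact ⟨Fin.cons a₀ a, Fin.cons b₀ b, alternatingProduct_cons a₀ a b₀ b⟩

lemma one_le_comap_map : 1 ≤ (Submodule.map e 𝒢).comap e :=
  g.one_le_toSubmodule_range.trans (Submodule.le_comap_map e _)

lemma range_mul_comap_map_mul_le
    (he : ∀ (b₁ b₂ : B) (x : 𝒜), e (g b₁ * x * g b₂) = g b₁ * e x * g b₂) :
    𝒢 * (Submodule.map e 𝒢).comap e * 𝒢 ≤ (Submodule.map e 𝒢).comap e := by
  refine Submodule.mul_le.mpr fun y hy _ hb₂ ↦ ?_
  obtain ⟨b₂, rfl⟩ := g.mem_toSubmodule_range.mp hb₂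
  refine Submodule.mul_induction_on hy (fun _ hb₁ x hx ↦ ?_) (fun _ _ h₁ h₂ ↦ ?_)
  · obtain ⟨b₁, rfl⟩ := g.mem_toSubmodule_range.mp hb₁
    obtain ⟨_, hb, hbx⟩ := hx
    obtain ⟨b, rfl⟩ := g.mem_toSubmodule_range.mp hb
    refine ⟨g (b₁ * b * b₂), g.apply_mem_toSubmodule_range _, ?_⟩
    rw [map_mul g, map_mul g, he, hbx, ← he]
  · rw [add_mul]; exact add_mem h₁ h₂

end General

section Complex

variable {A B 𝒜 : Type*} [Ring A] [Algebra ℂ A] [Ring B] [Algebra ℂ B] [Ring 𝒜] [Algebra ℂ 𝒜]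
  {f : A →ₐ[ℂ] 𝒜} {g : B →ₐ[ℂ] 𝒜} {e : 𝒜 →ₗ[ℂ] 𝒜} {ρ : A →ₗ[ℂ] B} {ψ : B →ₗ[ℂ] A}

lemma centeredWords_le_ker (h : RightLiberatingRep f g e ρ ψ) (n : ℕ) :
    centeredWords f g ρ (centeredB f g ψ) n ≤ LinearMap.ker e :=
  (centeredWords_le_span n).trans (Submodule.span_le.mpr fun _ ⟨a, b, hx⟩ ↦ hx ▸ h.2 n a b)

lemma pow_atMostOneCentered_le (h : RightLiberatingRep f g e ρ ψ) (n : ℕ) :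
    atMostOneCentered f g ρ ^ n ≤ (Submodule.map e (Subalgebra.toSubmodule g.range)).comap e :=
  atMostOneCentered.pow_le one_le_comap_map (range_mul_comap_map_mul_le h.1)
    (fun n ↦ (h.centeredWords_le_ker n).trans (LinearMap.ker_le_comap e)) n

end Complex

end RightLiberatingRep

theorem stmt12 {A B 𝒜 : Type*} [Ring A] [Algebra ℂ A] [Ring B] [Algebra ℂ B]
    [Ring 𝒜] [Algebra ℂ 𝒜]
    (f : A →ₐ[ℂ] 𝒜) (g : B →ₐ[ℂ] 𝒜) (e : 𝒜 →ₗ[ℂ] 𝒜)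
    (ρ : A →ₗ[ℂ] B) (ψ : B →ₗ[ℂ] A)
    (h : RightLiberatingRep f g e ρ ψ) :
    e '' ((Algebra.adjoin ℂ (Set.range ⇑f ∪ Set.range ⇑g) : Subalgebra ℂ 𝒜) : Set 𝒜) =
      e '' (Set.range ⇑g) := by
  refine (Set.image_mono (Set.subset_union_right.trans Algebra.subset_adjoin)).antisymm' ?_
  rintro _ ⟨x, hx, rfl⟩
  obtain ⟨n, hn⟩ := Submodule.exists_mem_pow_of_mem_adjoin
    RightLiberatingRep.atMostOneCentered.one_le
    RightLiberatingRep.atMostOneCentered.range_union_range_subset hx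
  obtain ⟨_, ⟨b, rfl⟩, hb⟩ := h.pow_atMostOneCentered_le n hn
  exact ⟨g b, ⟨b, rfl⟩, hb⟩
end

section
/- Suppose the pair (A, B) is right-liberated in 𝒞 with respect to (𝔢, ρ, ψ). Then for all b₀, b₁, b₂ ∈ B and a₁, a₂ ∈ A, 𝔢(b₀ a₁ b₁ a₂ b₂) = b₀ [ρ(a₁) b₁ ρ(a₂) + ρ(a₁ ψ(b₁) a₂) − ρ(a₁) ρ(ψ(b₁) a₂) − ρ(a₁ ψ(b₁)) ρ(a₂) + ρ(a₁) ρ(ψ(b₁)) ρ(a₂)] b₂ · 𝔢(1). -/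
theorem stmt14 {C : Type*} [Ring C] [Algebra ℂ C] (A B : Subalgebra ℂ C)
    (e : C →ₗ[ℂ] C) (ρ : A →ₗ[ℂ] B) (ψ : B →ₗ[ℂ] A)
    (h : RightLiberated A B e ρ ψ) (b₀ b₁ b₂ : B) (a₁ a₂ : A) :
    e ((b₀ : C) * (a₁ : C) * (b₁ : C) * (a₂ : C) * (b₂ : C)) =
      (b₀ : C) *
        (((ρ a₁ : B) : C) * (b₁ : C) * ((ρ a₂ : B) : C)
          + ((ρ (a₁ * ψ b₁ * a₂) : B) : C)
          - ((ρ a₁ : B) : C) * ((ρ (ψ b₁ * a₂) : B) : C)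
          - ((ρ (a₁ * ψ b₁) : B) : C) * ((ρ a₂ : B) : C)
          + ((ρ a₁ : B) : C) * ((ρ (ψ b₁) : B) : C) * ((ρ a₂ : B) : C)) *
        (b₂ : C) * e 1 := by
  obtain ⟨hbi, hvan⟩ := h
  have hL : ∀ (b : B) (x : C), e ((b : C) * x) = (b : C) * e x := by
    intro b x; simpa using hbi b 1 x
  have hR : ∀ (b : B) (x : C), e (x * (b : C)) = e x * (b : C) := by
    intro b x; simpa using hbi 1 b x
  have hEb : ∀ (b : B), e (b : C) = (b : C) * e 1 := by
    intro b; simpa using hL b 1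
  have hcomm : ∀ (b : B), e 1 * (b : C) = (b : C) * e 1 := by
    intro b
    have := hR b 1
    rw [one_mul, hEb] at this
    exact this.symm
  have swap : ∀ (x : C) (b : B), x * e 1 * (b : C) = x * (b : C) * e 1 := by
    intro x b; rw [mul_assoc, hcomm, ← mul_assoc]
  have hA : ∀ a : A, e (a : C) = ((ρ a : B) : C) * e 1 := by
    intro a
    have h0 := hvan 0 (fun _ => a) (fun i => i.elim0)
    simp [List.ofFn_succ] at h0
    rw [sub_eq_zero] at h0
    rw [h0, hEb]
  have h1 := hvan 1 ![a₁, a₂] ![b₁]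
  simp only [List.ofFn_succ, List.ofFn_zero, List.prod_cons, List.prod_nil, mul_one,
    Matrix.cons_val_zero, Matrix.cons_val_one, Matrix.head_cons] at h1
  have hlast : (![a₁, a₂] (Fin.last 1)) = a₂ := rfl
  have hfst : (![a₁, a₂] ((0 : Fin 1).castSucc)) = a₁ := rfl
  rw [hlast] at h1
  rw [hfst] at h1
  simp only [mul_sub, sub_mul, map_sub] at h1
  have t2 : e ((a₁ : C) * (b₁ : C) * ((ρ a₂ : B) : C)) =
      ((ρ a₁ : B) : C) * (b₁ : C) * ((ρ a₂ : B) : C) * e 1 := by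
    rw [hR, hR, hA, swap, swap]
  have t3 : e ((a₁ : C) * ((ψ b₁ : A) : C) * (a₂ : C)) =
      ((ρ (a₁ * ψ b₁ * a₂) : B) : C) * e 1 := by
    have h' : ((a₁ : C) * ((ψ b₁ : A) : C) * (a₂ : C)) = (((a₁ * ψ b₁ * a₂ : A) : C)) := rfl
    rw [h', hA]
  have t4 : e ((a₁ : C) * ((ψ b₁ : A) : C) * ((ρ a₂ : B) : C)) =
      ((ρ (a₁ * ψ b₁) : B) : C) * ((ρ a₂ : B) : C) * e 1 := by
    rw [hR]
    have h' : ((a₁ : C) * ((ψ b₁ : A) : C)) = (((a₁ * ψ b₁ : A) : C)) := rfl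
    rw [h', hA, swap]
  have t5 : e (((ρ a₁ : B) : C) * (b₁ : C) * (a₂ : C)) =
      ((ρ a₁ : B) : C) * (b₁ : C) * ((ρ a₂ : B) : C) * e 1 := by
    have h' : (((ρ a₁ : B) : C) * (b₁ : C) * (a₂ : C)) = ((ρ a₁ * b₁ : B) : C) * (a₂ : C) := rfl
    rw [h', hL, hA, ← mul_assoc]
    rfl
  have t6 : e (((ρ a₁ : B) : C) * (b₁ : C) * ((ρ a₂ : B) : C)) =
      ((ρ a₁ : B) : C) * (b₁ : C) * ((ρ a₂ : B) : C) * e 1 := by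
    have h' : (((ρ a₁ : B) : C) * (b₁ : C) * ((ρ a₂ : B) : C))
        = ((ρ a₁ * b₁ * ρ a₂ : B) : C) := rfl
    rw [h', hEb]
  have t7 : e (((ρ a₁ : B) : C) * ((ψ b₁ : A) : C) * (a₂ : C)) =
      ((ρ a₁ : B) : C) * ((ρ (ψ b₁ * a₂) : B) : C) * e 1 := by
    rw [mul_assoc, hL]
    have h' : (((ψ b₁ : A) : C) * (a₂ : C)) = ((ψ b₁ * a₂ : A) : C) := rfl
    rw [h', hA, ← mul_assoc]
  have t8 : e (((ρ a₁ : B) : C) * ((ψ b₁ : A) : C) * ((ρ a₂ : B) : C)) =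
      ((ρ a₁ : B) : C) * ((ρ (ψ b₁) : B) : C) * ((ρ a₂ : B) : C) * e 1 := by
    rw [hR, mul_assoc, hL, hA, ← mul_assoc, swap, mul_assoc]
  rw [t3, t4, t5, t6, t7, t8] at h1
  set S : C := (((ρ a₁ : B) : C) * (b₁ : C) * ((ρ a₂ : B) : C)
          + ((ρ (a₁ * ψ b₁ * a₂) : B) : C)
          - ((ρ a₁ : B) : C) * ((ρ (ψ b₁ * a₂) : B) : C)
          - ((ρ (a₁ * ψ b₁) : B) : C) * ((ρ a₂ : B) : C)
          + ((ρ a₁ : B) : C) * ((ρ (ψ b₁) : B) : C) * ((ρ a₂ : B) : C)) with hS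
  have key : e ((a₁ : C) * (b₁ : C) * (a₂ : C)) = S * e 1 := by
    rw [← sub_eq_zero, ← h1, hS]
    rw [t2]
    simp only [add_mul, sub_mul]
    abel
  have final : (b₀ : C) * (a₁ : C) * (b₁ : C) * (a₂ : C) * (b₂ : C) =
      (b₀ : C) * ((a₁ : C) * (b₁ : C) * (a₂ : C)) * (b₂ : C) := by
    rw [mul_assoc ((b₀ : C)), mul_assoc ((b₀ : C)), mul_assoc ((b₀ : C))]
  rw [final, hbi, key, ← mul_assoc, mul_assoc ((b₀ : C) * S), hcomm, ← mul_assoc]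
end

section
/- Suppose the pair (A, B) is left-liberated in 𝒞 with respect to (𝔢, ρ, ψ). Then for all a₀, a₁, a₂ ∈ A and b₁, b₂ ∈ B, 𝔢(a₀ b₁ a₁ b₂ a₂) = a₀ [ψ(b₁) a₁ ψ(b₂) + ψ(b₁ ρ(a₁) b₂) − ψ(b₁) ψ(ρ(a₁) b₂) − ψ(b₁ ρ(a₁)) ψ(b₂) + ψ(b₁) ψ(ρ(a₁)) ψ(b₂)] a₂ · 𝔢(1). -/
theorem stmt15 {C : Type*} [Ring C] [Algebra ℂ C] (A B : Subalgebra ℂ C)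
    (e : C →ₗ[ℂ] C) (ρ : A →ₗ[ℂ] B) (ψ : B →ₗ[ℂ] A)
    (h : LeftLiberated A B e ρ ψ) (a₀ a₁ a₂ : A) (b₁ b₂ : B) :
    e ((a₀ : C) * (b₁ : C) * (a₁ : C) * (b₂ : C) * (a₂ : C)) =
      (a₀ : C) *
        (((ψ b₁ : A) : C) * (a₁ : C) * ((ψ b₂ : A) : C)
          + ((ψ (b₁ * ρ a₁ * b₂) : A) : C)
          - ((ψ b₁ : A) : C) * ((ψ (ρ a₁ * b₂) : A) : C)
          - ((ψ (b₁ * ρ a₁) : A) : C) * ((ψ b₂ : A) : C)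
          + ((ψ b₁ : A) : C) * ((ψ (ρ a₁) : A) : C) * ((ψ b₂ : A) : C)) *
        (a₂ : C) * e 1 := by
  obtain ⟨hbim, hvan⟩ := h
  -- basic consequences
  have hcomm : ∀ a : A, e 1 * (a : C) = (a : C) * e 1 := by
    intro a
    have h1 := hbim a 1 1
    have h2 := hbim 1 a 1
    simp only [OneMemClass.coe_one, one_mul, mul_one] at h1 h2
    rw [← h1, ← h2]
  have heA : ∀ a : A, e (a : C) = (a : C) * e 1 := by
    intro a
    have := hbim a 1 1
    simpa using this
  have heB : ∀ b : B, e (b : C) = ((ψ b : A) : C) * e 1 := by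
    intro b
    have h0 : e ((b : C) - ((ψ b : A) : C)) = 0 := by
      simpa using hvan 0 (fun _ => b) (fun i => i.elim0)
    rw [map_sub, sub_eq_zero] at h0
    rw [h0, heA]
  have hE : ∀ (a a' : A) (b : B),
      e ((a : C) * (b : C) * (a' : C)) = (a : C) * ((ψ b : A) : C) * (a' : C) * e 1 := by
    intro a a' b
    rw [hbim a a' (b : C), heB b, mul_assoc (a : C), mul_assoc _ (e 1), hcomm]
    noncomm_ring
  -- the key n = 1 vanishing
  have h1 : e ((((b₁ : C) - ((ψ b₁ : A) : C)) * ((a₁ : C) - ((ρ a₁ : B) : C))) *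
      ((b₂ : C) - ((ψ b₂ : A) : C))) = 0 := by
    simpa [Fin.last] using hvan 1 ![b₁, b₂] ![a₁]
  -- expand the centered product
  have expand : (((b₁ : C) - ((ψ b₁ : A) : C)) * ((a₁ : C) - ((ρ a₁ : B) : C))) *
      ((b₂ : C) - ((ψ b₂ : A) : C)) =
      (b₁ : C) * (a₁ : C) * (b₂ : C) -
      ( ((1 : A) : C) * (b₁ : C) * ((a₁ * ψ b₂ : A) : C)
        + ((1 : A) : C) * ((b₁ * ρ a₁ * b₂ : B) : C) * ((1 : A) : C)
        - ((1 : A) : C) * ((b₁ * ρ a₁ : B) : C) * ((ψ b₂ : A) : C)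
        + ((ψ b₁ * a₁ : A) : C) * (b₂ : C) * ((1 : A) : C)
        - ((ψ b₁ * a₁ * ψ b₂ : A) : C)
        - ((ψ b₁ : A) : C) * ((ρ a₁ * b₂ : B) : C) * ((1 : A) : C)
        + ((ψ b₁ : A) : C) * ((ρ a₁ : B) : C) * ((ψ b₂ : A) : C) ) := by
    push_cast
    noncomm_ring
  rw [expand, map_sub, sub_eq_zero] at h1
  have key : e ((b₁ : C) * (a₁ : C) * (b₂ : C)) =
      (((ψ b₁ : A) : C) * (a₁ : C) * ((ψ b₂ : A) : C)
        + ((ψ (b₁ * ρ a₁ * b₂) : A) : C)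
        - ((ψ b₁ : A) : C) * ((ψ (ρ a₁ * b₂) : A) : C)
        - ((ψ (b₁ * ρ a₁) : A) : C) * ((ψ b₂ : A) : C)
        + ((ψ b₁ : A) : C) * ((ψ (ρ a₁) : A) : C) * ((ψ b₂ : A) : C)) * e 1 := by
    rw [h1]
    simp only [map_add, map_sub, hE, heA]
    push_cast
    noncomm_ring
  -- conclude
  have harg : (a₀ : C) * (b₁ : C) * (a₁ : C) * (b₂ : C) * (a₂ : C) =
      (a₀ : C) * ((b₁ : C) * (a₁ : C) * (b₂ : C)) * (a₂ : C) := by noncomm_ring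
  have hfin : ∀ x : C, (a₀ : C) * (x * e 1) * (a₂ : C) = (a₀ : C) * x * (a₂ : C) * e 1 := by
    intro x
    rw [mul_assoc (a₀ : C), mul_assoc x, hcomm]
    noncomm_ring
  rw [harg, hbim a₀ a₂, key, hfin]
end

section
/- Suppose the pair (A, B) is right-liberated in 𝒞 with respect to (𝔢, ρ, ψ), and suppose moreover that ψ is scalar-valued, i.e. there is a ℂ-linear functional ν : B → ℂ with ψ(b) = ν(b)·1 for all b ∈ B. Then for all b₀, b₁, b₂ ∈ B and a₁, a₂ ∈ A, 𝔢(b₀ a₁ b₁ a₂ b₂) = b₀ [ν(b₁)(ρ(a₁ a₂) − ρ(a₁) ρ(a₂)) + ρ(a₁) b₁ ρ(a₂)] b₂ · 𝔢(1). -/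
theorem stmt16 {C : Type*} [Ring C] [Algebra ℂ C] (A B : Subalgebra ℂ C)
    (e : C →ₗ[ℂ] C) (ρ : A →ₗ[ℂ] B) (ψ : B →ₗ[ℂ] A)
    (h : RightLiberated A B e ρ ψ)
    (ν : B →ₗ[ℂ] ℂ) (hν : ∀ b : B, ψ b = ν b • (1 : A))
    (b₀ b₁ b₂ : B) (a₁ a₂ : A) :
    e ((b₀ : C) * (a₁ : C) * (b₁ : C) * (a₂ : C) * (b₂ : C)) =
      (b₀ : C) *
        (ν b₁ • (((ρ (a₁ * a₂) : B) : C) - ((ρ a₁ : B) : C) * ((ρ a₂ : B) : C))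
          + ((ρ a₁ : B) : C) * (b₁ : C) * ((ρ a₂ : B) : C)) *
        (b₂ : C) * e 1 := by
  obtain ⟨hB, hC⟩ := h
  -- e on elements of B
  have hone : ∀ b : B, e (b : C) = (b : C) * e 1 := by
    intro b
    have := hB b 1 1
    simpa using this
  -- e kills centered elements of A
  have h0 : ∀ a : A, e ((a : C) - ((ρ a : B) : C)) = 0 := by
    intro a
    have := hC 0 (fun _ => a) (fun i => i.elim0)
    simpa using this
  have hA : ∀ a : A, e (a : C) = ((ρ a : B) : C) * e 1 := by
    intro a
    have h0' := h0 a
    rw [map_sub, sub_eq_zero] at h0'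
    rw [h0', hone]
  -- the mixed alternating vanishing for n = 1
  have hmix : e (((a₁ : C) - ((ρ a₁ : B) : C)) * ((b₁ : C) - ((ψ b₁ : A) : C)) *
      ((a₂ : C) - ((ρ a₂ : B) : C))) = 0 := by
    have := hC 1 ![a₁, a₂] ![b₁]
    simpa using this
  -- abbreviations
  set x₁ : C := ((ρ a₁ : B) : C) with hx₁
  set x₂ : C := ((ρ a₂ : B) : C) with hx₂
  have hψc : ((ψ b₁ : A) : C) = algebraMap ℂ C (ν b₁) := by
    rw [hν b₁]
    push_cast
    rw [Algebra.smul_def, mul_one]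
  set p : C := algebraMap ℂ C (ν b₁) with hp
  set w₁ : C := (a₁ : C) - x₁ with hw₁
  set w₂ : C := (a₂ : C) - x₂ with hw₂
  set bt : C := (b₁ : C) - p with hbt
  have hmix' : e (w₁ * bt * w₂) = 0 := by
    rw [hbt, ← hψc]; exact hmix
  -- b̃ as an element of B
  have hbtB : bt = ((b₁ - ν b₁ • 1 : B) : C) := by
    push_cast
    rw [hbt, hp, Algebra.smul_def, mul_one]
  -- e(w₁ * bt) = 0
  have h2 : e (w₁ * bt) = 0 := by
    have := hB 1 (b₁ - ν b₁ • 1) w₁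
    rw [← hbtB] at this
    simp only [OneMemClass.coe_one, one_mul] at this
    rw [this, h0 a₁]
    simp
  -- e(w₁ * bt * x₂) = 0
  have h3 : e (w₁ * bt * x₂) = 0 := by
    have := hB 1 (ρ a₂) (w₁ * bt)
    simp only [OneMemClass.coe_one, one_mul] at this
    rw [← hx₂] at this
    rw [this, h2]
    simp
  -- e(x₁ * bt * w₂) = 0
  have h4 : e (x₁ * bt * w₂) = 0 := by
    have := hB (ρ a₁ * (b₁ - ν b₁ • 1)) 1 w₂
    simp only [OneMemClass.coe_one, mul_one, MulMemClass.coe_mul] at this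
    rw [← hbtB, ← hx₁] at this
    rw [this, hw₂, hx₂, h0 a₂]
    simp
  -- e(x₁ * bt * x₂) = x₁ * bt * x₂ * e 1
  have h5 : e (x₁ * bt * x₂) = x₁ * bt * x₂ * e 1 := by
    have := hone (ρ a₁ * (b₁ - ν b₁ • 1) * ρ a₂)
    simp only [MulMemClass.coe_mul] at this
    rw [← hbtB, ← hx₁, ← hx₂] at this
    exact this
  -- e(a₁ * a₂)
  have h6 : e ((a₁ : C) * (a₂ : C)) = ((ρ (a₁ * a₂) : B) : C) * e 1 := by
    have := hA (a₁ * a₂)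
    simpa using this
  have hpc : ∀ y : C, y * p = p * y := fun y => (Algebra.commutes _ _).symm
  -- the decomposition
  have hdec : (a₁ : C) * (b₁ : C) * (a₂ : C) =
      w₁ * bt * w₂ + w₁ * bt * x₂ + x₁ * bt * w₂ + x₁ * bt * x₂ +
        (a₁ : C) * p * (a₂ : C) := by
    rw [hw₁, hw₂, hbt]
    noncomm_ring
  -- main computation
  have hmain : e ((b₀ : C) * (a₁ : C) * (b₁ : C) * (a₂ : C) * (b₂ : C)) =
      (b₀ : C) * e ((a₁ : C) * (b₁ : C) * (a₂ : C)) * (b₂ : C) := by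
    have := hB b₀ b₂ ((a₁ : C) * (b₁ : C) * (a₂ : C))
    rw [← this]
    noncomm_ring
  have h7 : e ((a₁ : C) * p * (a₂ : C)) = p * (((ρ (a₁ * a₂) : B) : C) * e 1) := by
    have heq : (a₁ : C) * p * (a₂ : C) = ν b₁ • ((a₁ : C) * (a₂ : C)) := by
      rw [hpc, mul_assoc, hp, ← Algebra.smul_def]
    rw [heq, map_smul, h6, hp, Algebra.smul_def]
  rw [hmain, hdec]
  rw [map_add, map_add, map_add, map_add, hmix', h3, h4, h5, h7]
  rw [Algebra.smul_def, ← hp, hbt]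
  have key : x₁ * ((b₁ : C) - p) * x₂ = x₁ * (b₁ : C) * x₂ - p * (x₁ * x₂) := by
    rw [mul_sub, sub_mul, hpc x₁]; noncomm_ring
  rw [key]
  have hcb : e 1 * (b₂ : C) = (b₂ : C) * e 1 := by
    have h1 := hB 1 b₂ 1
    simp only [OneMemClass.coe_one, one_mul, mul_one] at h1
    rw [← h1, hone]
  simp only [mul_assoc, add_mul, sub_mul, zero_mul, zero_add, hcb]
  noncomm_ring
end

section
/- Let H be a separable complex Hilbert space, M a von Neumann algebra on H, and {α_t}_{t≥0} an e₀-semigroup on M, i.e. α_0 = id, α_s ∘ α_t = α_{s+t}, and each α_t : M → M is a unital normal *-endomorphism. Suppose that for each a ∈ M the map t ↦ α_t(a) is WOT-continuous at every t > 0. Then the following are equivalent: (i) for each a ∈ M the map t ↦ α_t(a) is WOT-continuous at t = 0; (ii) ⋂_{t>0} ker α_t = {0}. -/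
open scoped NNReal

/-!
If the orbits are continuous at `0`, an element killed by every `α t`, `t > 0`, is the limit of
the zero function, hence `0`. Conversely, take `a` in the unit ball. Its orbit stays in the unit
ball (the `α s` are contractive), and the unit ball is WOT-compact, so it suffices that every
cluster point `b` of `α s a` as `s → 0+` equals `a`. For `t > 0`, normality of `α t` makes `α t b`
a cluster point of `α t (α s a) = α (t + s) a`, which converges to `α t a`; thus `b - a` lies in
every kernel and `b = a`. Arbitrary `a` are handled by scaling.
-/

open Filter Topology Set
open scoped InnerProductSpace

section WeakOperatorTopology

variable {H : Type*} [NormedAddCommGroup H] [InnerProductSpace ℂ H]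

noncomputable def matrixCoeff (T : H →L[ℂ] H) (p : H × H) : ℂ := ⟪T p.1, p.2⟫_ℂ

lemma isEmbedding_matrixCoeff : @IsEmbedding _ _ (wotCLM H) _ (matrixCoeff (H := H)) := by
  let := wotCLM H
  exact ⟨⟨rfl⟩, fun _ _ h =>
    ContinuousLinearMap.ext fun x => ext_inner_right ℂ fun y => congrFun h (x, y)⟩

lemma continuous_wotCLM_iff {X : Type*} [TopologicalSpace X] {f : X → H →L[ℂ] H} :
    Continuous[_, wotCLM H] f ↔ ∀ x y : H, Continuous fun a => ⟪f a x, y⟫_ℂ := by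
  let := wotCLM H
  rw [isEmbedding_matrixCoeff.continuous_iff, continuous_pi_iff, Prod.forall]
  rfl

lemma t2Space_wotCLM : @T2Space _ (wotCLM H) := by
  let := wotCLM H
  exact isEmbedding_matrixCoeff.t2Space

lemma le_wotCLM : (inferInstance : TopologicalSpace (H →L[ℂ] H)) ≤ wotCLM H :=
  continuous_id_iff_le.1 <| continuous_wotCLM_iff.2 fun x _ =>
    ((ContinuousLinearMap.apply ℂ H x).continuous).inner continuous_const

lemma continuous_mul_right_wotCLM (m : H →L[ℂ] H) :
    Continuous[wotCLM H, wotCLM H] fun T => T * m := by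
  let := wotCLM H
  exact continuous_wotCLM_iff.2 fun x y => (continuous_wotCLM_iff.1 continuous_id) (m x) y

lemma continuous_mul_left_wotCLM [CompleteSpace H] (m : H →L[ℂ] H) :
    Continuous[wotCLM H, wotCLM H] fun T => m * T := by
  let := wotCLM H
  refine continuous_wotCLM_iff.2 fun x y => ?_
  show Continuous fun T : H →L[ℂ] H => ⟪m (T x), y⟫_ℂ
  simp_rw [← ContinuousLinearMap.adjoint_inner_right m]
  exact (continuous_wotCLM_iff.1 continuous_id) x _

lemma isClosed_centralizer_wotCLM [CompleteSpace H] (s : Set (H →L[ℂ] H)) :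
    IsClosed[wotCLM H] (centralizer s) := by
  let := wotCLM H
  have := t2Space_wotCLM (H := H)
  rw [show centralizer s = ⋂ m ∈ s, {T | m * T = T * m} by ext; simp [mem_centralizer_iff]]
  exact isClosed_biInter fun m _ =>
    isClosed_eq (continuous_mul_left_wotCLM m) (continuous_mul_right_wotCLM m)

lemma VonNeumannAlgebra.isClosed_wotCLM [CompleteSpace H] (M : VonNeumannAlgebra H) :
    IsClosed[wotCLM H] (M : Set (H →L[ℂ] H)) :=
  M.centralizer_centralizer ▸ isClosed_centralizer_wotCLM _

end WeakOperatorTopology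

section Compactness

variable {H : Type*} [NormedAddCommGroup H] [InnerProductSpace ℂ H]

variable (H) in
def sesqFormBall (r : ℝ) : Set (H × H → ℂ) :=
  {g | (∀ x x' y, g (x + x', y) = g (x, y) + g (x', y)) ∧
    (∀ (c : ℂ) x y, g (c • x, y) = starRingEnd ℂ c • g (x, y)) ∧
    (∀ x y y', g (x, y + y') = g (x, y) + g (x, y')) ∧
    (∀ (c : ℂ) x y, g (x, c • y) = c • g (x, y)) ∧
    ∀ x y, ‖g (x, y)‖ ≤ r * ‖x‖ * ‖y‖}

lemma isClosed_sesqFormBall (r : ℝ) : IsClosed (sesqFormBall H r) := by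
  simp only [sesqFormBall, ofPred_and, ofPred_forall]
  repeat' first
    | refine IsClosed.inter ?_ ?_
    | refine isClosed_iInter fun _ => ?_
    | refine isClosed_eq ?_ ?_
    | refine isClosed_le ?_ ?_
  all_goals fun_prop

lemma image_matrixCoeff_closedBall [CompleteSpace H] {r : ℝ} (hr : 0 ≤ r) :
    matrixCoeff '' {T : H →L[ℂ] H | ‖T‖ ≤ r} = sesqFormBall H r := by
  apply Subset.antisymm
  · rintro _ ⟨T, hT, rfl⟩
    refine ⟨fun x x' y => ?_, fun c x y => ?_, fun x y y' => ?_, fun c x y => ?_, fun x y => ?_⟩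
    all_goals simp only [matrixCoeff, map_add, map_smul, inner_add_left, inner_add_right,
      inner_smul_left, inner_smul_right, smul_eq_mul]
    calc ‖⟪T x, y⟫_ℂ‖ ≤ ‖T x‖ * ‖y‖ := norm_inner_le_norm _ _
      _ ≤ r * ‖x‖ * ‖y‖ := by gcongr; exact T.le_of_opNorm_le hT x
  · rintro g ⟨hadd₁, hsmul₁, hadd₂, hsmul₂, hbound⟩
    let B := (LinearMap.mk₂'ₛₗ (starRingEnd ℂ) (RingHom.id ℂ) (fun x y => g (x, y))
      hadd₁ hsmul₁ hadd₂ hsmul₂).mkContinuous₂ r hbound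
    refine ⟨InnerProductSpace.continuousLinearMapOfBilin B, ?_, ?_⟩
    · exact (InnerProductSpace.toDual ℂ H).symm.toLinearIsometry.norm_toContinuousLinearMap_comp
        |>.trans_le (LinearMap.mkContinuous₂_norm_le _ hr _)
    · ext p
      exact InnerProductSpace.continuousLinearMapOfBilin_apply B p.1 p.2

lemma isCompact_closedBall_wotCLM [CompleteSpace H] {r : ℝ} (hr : 0 ≤ r) :
    @IsCompact _ (wotCLM H) {T : H →L[ℂ] H | ‖T‖ ≤ r} := by
  let := wotCLM H
  rw [isEmbedding_matrixCoeff.isCompact_iff, image_matrixCoeff_closedBall hr]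
  refine (isCompact_univ_pi fun p : H × H => isCompact_closedBall 0 (r * ‖p.1‖ * ‖p.2‖))
    |>.of_isClosed_subset (isClosed_sesqFormBall r) fun g hg p _ => ?_
  simpa using hg.2.2.2.2 p.1 p.2

end Compactness

namespace VonNeumannAlgebra

variable {H : Type*} [NormedAddCommGroup H] [InnerProductSpace ℂ H] [CompleteSpace H]
  (M : VonNeumannAlgebra H)

lemma isEmbedding_matrixCoeff_wotvN :
    @IsEmbedding M _ (wotvN H M) _ fun a => matrixCoeff (a : H →L[ℂ] H) := by
  let := wotCLM H
  exact isEmbedding_matrixCoeff.comp IsEmbedding.subtypeVal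

lemma t2Space_wotvN : @T2Space M (wotvN H M) := by
  let := wotvN H M
  exact M.isEmbedding_matrixCoeff_wotvN.t2Space

lemma continuousConstSMul_wotvN : @ContinuousConstSMul ℂ M (wotvN H M) _ := by
  let := wotvN H M
  refine M.isEmbedding_matrixCoeff_wotvN.isInducing.continuousConstSMul (starRingEnd ℂ) ?_
  intro c a
  ext p
  exact inner_smul_left _ _ c

lemma isCompact_closedBall_wotvN {r : ℝ} (hr : 0 ≤ r) :
    @IsCompact M (wotvN H M) {a | ‖(a : H →L[ℂ] H)‖ ≤ r} := by
  let := wotCLM H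
  refine IsEmbedding.subtypeVal.isCompact_iff.2 ?_
  convert (isCompact_closedBall_wotCLM hr).inter_left M.isClosed_wotCLM
  ext T
  exact ⟨fun ⟨a, ha, hT⟩ => hT ▸ ⟨a.2, ha⟩, fun ⟨hM, hT⟩ => ⟨⟨T, hM⟩, hT, rfl⟩⟩

lemma norm_map_le (φ : M →⋆ₐ[ℂ] M) (a : M) : ‖φ a‖ ≤ ‖a‖ := by
  let : CStarAlgebra M := StarSubalgebra.cstarAlgebra M.toStarSubalgebra
    (h_closed := M.isClosed_wotCLM.mono le_wotCLM)
  exact NonUnitalStarAlgHom.norm_apply_le φ a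

lemma exists_eq_smul_of_norm_le_one (a : M) :
    ∃ c : ℂ, ∃ b : M, ‖(b : H →L[ℂ] H)‖ ≤ 1 ∧ a = c • b := by
  rcases eq_or_ne a 0 with rfl | ha
  · exact ⟨0, 0, by simp⟩
  · have ha' : ‖(a : H →L[ℂ] H)‖ ≠ 0 := by simpa using ha
    refine ⟨‖(a : H →L[ℂ] H)‖, (‖(a : H →L[ℂ] H)‖ : ℂ)⁻¹ • a, ?_,
      (smul_inv_smul₀ (by exact_mod_cast ha') a).symm⟩
    show ‖(‖(a : H →L[ℂ] H)‖ : ℂ)⁻¹ • (a : H →L[ℂ] H)‖ ≤ 1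
    rw [norm_smul, norm_inv, Complex.norm_real, norm_norm, inv_mul_cancel₀ ha']

end VonNeumannAlgebra

lemma NNReal.continuousAt_zero_iff {X : Type*} [TopologicalSpace X] {f : ℝ≥0 → X} :
    ContinuousAt f 0 ↔ Tendsto f (𝓝[>] 0) (𝓝 (f 0)) := by
  rw [← continuousWithinAt_univ, ← Ici_bot, bot_eq_zero, ← continuousWithinAt_Ioi_iff_Ici]
  rfl

section Semigroup

variable {E F : Type*} [TopologicalSpace E] [FunLike F E E]

lemma apply_eq_of_mapClusterPt [T2Space E] {α : ℝ≥0 → F} {K : Set E} {a b : E} {t : ℝ≥0}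
    (hadd : ∀ s, α (t + s) a = α t (α s a)) (hK : ∀ s, α s a ∈ K) (hα : ContinuousOn (α t) K)
    (hcont : ContinuousAt (fun s => α s a) t) (hbK : b ∈ K)
    (hb : MapClusterPt b (𝓝[>] 0) fun s => α s a) : α t b = α t a := by
  have hcomp : MapClusterPt (α t b) (𝓝[>] 0) fun s => α t (α s a) :=
    hb.tendsto_comp' <| (hα b hbK).mono_left <| inf_le_inf_left _ <|
      le_principal_iff.2 <| mem_map.2 <| univ_mem' hK
  have hlim : Tendsto (fun s => α t (α s a)) (𝓝[>] 0) (𝓝 (α t a)) := by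
    simp_rw [← hadd]
    refine hcont.tendsto.comp ?_
    simpa using ((continuous_const_add t).tendsto 0).mono_left nhdsWithin_le_nhds
  exact eq_of_nhds_neBot (hcomp.clusterPt.mono hlim)

theorem tendsto_apply_nhdsGT_zero [T2Space E] [AddGroup E] [AddMonoidHomClass F E E]
    {α : ℝ≥0 → F} {K : Set E} (hK : IsCompact K) (hKα : ∀ s, MapsTo (α s) K K)
    (hα : ∀ t, ContinuousOn (α t) K) (hadd : ∀ s t a, α (s + t) a = α s (α t a))
    (hcont : ∀ a t, 0 < t → ContinuousAt (fun s => α s a) t)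
    (hker : ⋂ t ∈ Ioi 0, {a | α t a = 0} = {0}) {a : E} (ha : a ∈ K) :
    Tendsto (fun s => α s a) (𝓝[>] 0) (𝓝 a) := by
  refine hK.tendsto_nhds_of_unique_mapClusterPt (.of_forall fun s => hKα s ha) fun b hbK hb => ?_
  have hba : b - a ∈ ⋂ t ∈ Ioi 0, {a | α t a = 0} := mem_iInter₂.2 fun t ht => by
    simp [apply_eq_of_mapClusterPt (hadd t · a) (hKα · ha) (hα t) (hcont a t ht) hbK hb]
  rwa [hker, mem_singleton_iff, sub_eq_zero] at hba

theorem continuousAt_zero_iff_iInter_ker_eq_zero {R : Type*} [T2Space E] [AddGroup E]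
    [SMul R E] [ContinuousConstSMul R E] [AddMonoidHomClass F E E] [MulActionHomClass F R E E]
    {α : ℝ≥0 → F} {K : Set E} (hK : IsCompact K) (hKabs : ∀ a, ∃ c : R, ∃ b ∈ K, a = c • b)
    (hKα : ∀ s, MapsTo (α s) K K) (hα : ∀ t, ContinuousOn (α t) K) (hα0 : ∀ a, α 0 a = a)
    (hadd : ∀ s t a, α (s + t) a = α s (α t a))
    (hcont : ∀ a t, 0 < t → ContinuousAt (fun s => α s a) t) :
    (∀ a, ContinuousAt (fun s => α s a) 0) ↔ ⋂ t ∈ Ioi 0, {a | α t a = 0} = {0} := by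
  simp_rw [NNReal.continuousAt_zero_iff, hα0]
  constructor
  · refine fun h => Subset.antisymm (fun a ha => ?_) (by simp)
    have hzero : Tendsto (fun s => α s a) (𝓝[>] 0) (𝓝 0) :=
      tendsto_const_nhds.congr' <| eventually_nhdsWithin_of_forall fun t ht =>
        ((mem_iInter₂.1 ha) t ht).symm
    exact tendsto_nhds_unique (h a) hzero
  · intro hker a
    obtain ⟨c, b, hb, rfl⟩ := hKabs a
    simpa only [map_smul] using
      (tendsto_apply_nhdsGT_zero hK hKα hα hadd hcont hker hb).const_smul c

end Semigroup

theorem stmt18_general (H : Type) [NormedAddCommGroup H] [InnerProductSpace ℂ H] [CompleteSpace H]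
    (M : VonNeumannAlgebra H)
    (α : ℝ≥0 → (↥M →⋆ₐ[ℂ] ↥M))
    (hα0 : α 0 = StarAlgHom.id ℂ ↥M)
    (hadd : ∀ s t : ℝ≥0, α (s + t) = (α s).comp (α t))
    -- each `α t` is normal: WOT-continuous on the closed unit ball
    (hnormal : ∀ t : ℝ≥0, @ContinuousOn ↥M ↥M (wotvN H M) (wotvN H M) (α t)
      {a : ↥M | ‖(a : H →L[ℂ] H)‖ ≤ 1})
    -- `t ↦ α t a` is WOT-continuous at every `t > 0`
    (hcont : ∀ (a : ↥M) (t : ℝ≥0), 0 < t →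
      @ContinuousAt ℝ≥0 ↥M _ (wotvN H M) (fun s => α s a) t) :
    (∀ a : ↥M, @ContinuousAt ℝ≥0 ↥M _ (wotvN H M) (fun s => α s a) 0) ↔
      (⋂ t ∈ Set.Ioi (0 : ℝ≥0), {a : ↥M | α t a = 0}) = {0} := by
  let := wotvN H M
  have := M.t2Space_wotvN
  have := M.continuousConstSMul_wotvN
  exact continuousAt_zero_iff_iInter_ker_eq_zero (M.isCompact_closedBall_wotvN zero_le_one)
    M.exists_eq_smul_of_norm_le_one
    (fun s a ha => (M.norm_map_le (α s) a).trans ha) hnormal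
    (fun a => by rw [hα0]; rfl) (fun s t a => by rw [hadd]; rfl) hcont

/-- For an e₀-semigroup on a von Neumann algebra on a separable Hilbert space which is
pointwise WOT-continuous at every `t > 0`, pointwise WOT-continuity at `t = 0` is
equivalent to `⋂_{t>0} ker α_t = {0}`. -/
theorem stmt18 (H : Type) [NormedAddCommGroup H] [InnerProductSpace ℂ H] [CompleteSpace H]
    [TopologicalSpace.SeparableSpace H] (M : VonNeumannAlgebra H)
    (α : ℝ≥0 → (↥M →⋆ₐ[ℂ] ↥M))
    (hα0 : α 0 = StarAlgHom.id ℂ ↥M)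
    (hadd : ∀ s t : ℝ≥0, α (s + t) = (α s).comp (α t))
    -- each `α t` is normal: WOT-continuous on the closed unit ball
    (hnormal : ∀ t : ℝ≥0, @ContinuousOn ↥M ↥M (wotvN H M) (wotvN H M) (α t)
      {a : ↥M | ‖(a : H →L[ℂ] H)‖ ≤ 1})
    -- `t ↦ α t a` is WOT-continuous at every `t > 0`
    (hcont : ∀ (a : ↥M) (t : ℝ≥0), 0 < t →
      @ContinuousAt ℝ≥0 ↥M _ (wotvN H M) (fun s => α s a) t) :
    (∀ a : ↥M, @ContinuousAt ℝ≥0 ↥M _ (wotvN H M) (fun s => α s a) 0) ↔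
      (⋂ t ∈ Set.Ioi (0 : ℝ≥0), {a : ↥M | α t a = 0}) = {0} :=
  stmt18_general H M α hα0 hadd hnormal hcont
end
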